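/- arXiv:math/0602552 — 13 statements merged into one kernel-verified Lean document; each statement's English description precedes it below -/
import Mathlib

section
/- (Lemma 1) For any real vector u = (u_1,...,u_n), a weak order ρ on X = {X_1,...,X_n} maximizes ∑_i u_i·ρ(i) over all weak orders if and only if for all i, j, u_i > u_j implies X_i ≻_ρ X_j (i.e., ρ(i) > ρ(j)). -/
/-!
Writing `ρ(i) = ∑ⱼ (1[i ρ j] - 1[j ρ i])` and symmetrising in `i, j` gives
`2 ∑ᵢ uᵢ ρ(i) = ∑ᵢⱼ (uᵢ - uⱼ)(1[i ρ j] - 1[j ρ i]) ≤ ∑ᵢⱼ |uᵢ - uⱼ|`, for every relation `ρ`,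
with equality exactly when `i` is strictly preferred to `j` whenever `uᵢ > uⱼ`. The weak order
induced by `u` attains the bound, so the maximizers are the weak orders attaining it; and in a
weak order, strict preference of `i` over `j` is the same as `ρ(i) > ρ(j)`.
-/

/-- The Copeland index of alternative `i` in a binary relation `r` on `Fin n`. -/
noncomputable def copeland {n : ℕ} (r : Fin n → Fin n → Prop) (i : Fin n) : ℤ :=
  (({j | r i j} : Set (Fin n)).ncard : ℤ) - (({j | r j i} : Set (Fin n)).ncard : ℤ)

/-- A weak order: a complete and transitive binary relation. -/
def IsWeakOrder {n : ℕ} (r : Fin n → Fin n → Prop) : Prop :=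
  (∀ i j, r i j ∨ r j i) ∧ Transitive r

open Finset

theorem two_mul_sum_mul_sum_eq_of_antisymm {ι R : Type*} [Fintype ι] [CommRing R]
    (u : ι → R) (a : ι → ι → R) (ha : ∀ i j, a j i = -a i j) :
    2 * ∑ i, u i * ∑ j, a i j = ∑ i, ∑ j, (u i - u j) * a i j := by
  have hswap : ∑ i, ∑ j, u j * a i j = -∑ i, ∑ j, u i * a i j := by
    rw [sum_comm, ← sum_neg_distrib]
    refine sum_congr rfl fun i _ => ?_
    rw [← sum_neg_distrib]
    exact sum_congr rfl fun j _ => by rw [ha, mul_neg]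
  simp only [sub_mul, sum_sub_distrib, hswap, ← mul_sum]
  ring

open Classical in
noncomputable def netPref {n : ℕ} (s : Fin n → Fin n → Prop) (i j : Fin n) : ℤ :=
  (if s i j then 1 else 0) - (if s j i then 1 else 0)

section netPref
variable {n : ℕ} (s : Fin n → Fin n → Prop) (i j : Fin n)

theorem netPref_swap : netPref s j i = -netPref s i j := by
  simp only [netPref]; ring

theorem abs_netPref_le_one : |netPref s i j| ≤ 1 := by
  unfold netPref; split_ifs <;> norm_num

variable {s i j}

theorem netPref_eq_one_iff : netPref s i j = 1 ↔ s i j ∧ ¬ s j i := by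
  unfold netPref; split_ifs <;> simp_all

theorem copeland_eq_sum_netPref : copeland s i = ∑ j, netPref s i j := by
  classical
  have hcard : ∀ p : Fin n → Prop, (({j | p j} : Set (Fin n)).ncard : ℤ)
      = ∑ j, if p j then 1 else 0 := by
    intro p
    rw [Set.ncard_eq_toFinset_card', Set.toFinset_ofPred, natCast_card_filter]
  simp only [copeland, netPref, sum_sub_distrib, hcard]

end netPref

section value
variable {n : ℕ} (u : Fin n → ℝ) (s : Fin n → Fin n → Prop)

theorem mul_netPref_le_abs (i j : Fin n) : (u i - u j) * netPref s i j ≤ |u i - u j| :=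
  calc (u i - u j) * netPref s i j
      ≤ |u i - u j| * |(netPref s i j : ℝ)| := abs_mul (u i - u j) _ ▸ le_abs_self _
    _ ≤ |u i - u j| * 1 := by gcongr; exact_mod_cast abs_netPref_le_one s i j
    _ = |u i - u j| := mul_one _

theorem mul_netPref_eq_abs_iff_of_lt {i j : Fin n} (h : u j < u i) :
    (u i - u j) * netPref s i j = |u i - u j| ↔ netPref s i j = 1 := by
  have hpos : 0 < u i - u j := sub_pos.2 h
  rw [abs_of_pos hpos]
  constructor
  · intro he
    exact_mod_cast mul_left_cancel₀ hpos.ne' (he.trans (mul_one _).symm)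
  · intro h1
    rw [h1, Int.cast_one, mul_one]

theorem two_mul_sum_mul_copeland :
    2 * ∑ i, u i * (copeland s i : ℝ) = ∑ i, ∑ j, (u i - u j) * netPref s i j := by
  simp only [copeland_eq_sum_netPref, Int.cast_sum]
  exact two_mul_sum_mul_sum_eq_of_antisymm _ _ fun i j => by
    rw [netPref_swap, Int.cast_neg]

theorem two_mul_sum_mul_copeland_le :
    2 * ∑ i, u i * (copeland s i : ℝ) ≤ ∑ i, ∑ j, |u i - u j| := by
  rw [two_mul_sum_mul_copeland]
  exact sum_le_sum fun i _ => sum_le_sum fun j _ => mul_netPref_le_abs u s i j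

theorem two_mul_sum_mul_copeland_eq_iff :
    2 * ∑ i, u i * (copeland s i : ℝ) = ∑ i, ∑ j, |u i - u j| ↔
      ∀ i j, u j < u i → netPref s i j = 1 := by
  have hrow : ∀ i ∈ univ, ∑ j, (u i - u j) * netPref s i j ≤ ∑ j, |u i - u j| :=
    fun i _ => sum_le_sum fun j _ => mul_netPref_le_abs u s i j
  rw [two_mul_sum_mul_copeland, sum_eq_sum_iff_of_le hrow]
  simp only [mem_univ, forall_const,
    sum_eq_sum_iff_of_le fun j _ => mul_netPref_le_abs u s _ j]
  constructor
  · intro heq i j h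
    exact (mul_netPref_eq_abs_iff_of_lt u s h).1 (heq i j)
  · intro hpref i j
    rcases lt_trichotomy (u i) (u j) with h | h | h
    · rw [← neg_sub, neg_mul, abs_neg, ← mul_neg, ← Int.cast_neg, ← netPref_swap]
      exact (mul_netPref_eq_abs_iff_of_lt u s h).2 (hpref j i h)
    · simp [h]
    · exact (mul_netPref_eq_abs_iff_of_lt u s h).2 (hpref i j h)

end value

section weakOrder
variable {n : ℕ} {r : Fin n → Fin n → Prop}

theorem copeland_le_copeland_of_rel (hr : IsWeakOrder r) {i j : Fin n} (hij : r i j) :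
    copeland r j ≤ copeland r i := by
  have hout : {k | r j k} ⊆ {k | r i k} := fun k hk => hr.2 hij hk
  have hin : {k | r k i} ⊆ {k | r k j} := fun k hk => hr.2 hk hij
  have := Set.ncard_le_ncard hout (Set.toFinite _)
  have := Set.ncard_le_ncard hin (Set.toFinite _)
  unfold copeland
  omega

theorem copeland_lt_copeland_of_not_rel (hr : IsWeakOrder r) {i j : Fin n} (hji : ¬ r j i) :
    copeland r j < copeland r i := by
  have hij : r i j := (hr.1 i j).resolve_right hji
  have hout : {k | r j k} ⊂ {k | r i k} :=
    ⟨fun k hk => hr.2 hij hk, fun hsub => hji (hsub ((hr.1 i i).elim id id))⟩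
  have hin : {k | r k i} ⊆ {k | r k j} := fun k hk => hr.2 hk hij
  have := Set.ncard_lt_ncard hout (Set.toFinite _)
  have := Set.ncard_le_ncard hin (Set.toFinite _)
  unfold copeland
  omega

theorem netPref_eq_one_iff_copeland_lt (hr : IsWeakOrder r) {i j : Fin n} :
    netPref r i j = 1 ↔ copeland r j < copeland r i := by
  rw [netPref_eq_one_iff]
  refine ⟨fun h => copeland_lt_copeland_of_not_rel hr h.2, fun h => ?_⟩
  have hji : ¬ r j i := fun hji => (copeland_le_copeland_of_rel hr hji).not_gt h
  exact ⟨(hr.1 i j).resolve_right hji, hji⟩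

theorem isWeakOrder_ge_comp {α : Type*} [LinearOrder α] (u : Fin n → α) :
    IsWeakOrder fun i j => u j ≤ u i :=
  ⟨fun i j => le_total (u j) (u i), fun _ _ _ hij hjk => hjk.trans hij⟩

end weakOrder

/-- Lemma 1: a weak order maximizes `∑ i, u i * ρ(i)` over all weak orders
iff it preserves the strict order of the `u i`. -/
theorem stmt2 (n : ℕ) (u : Fin n → ℝ) (r : Fin n → Fin n → Prop) (hr : IsWeakOrder r) :
    (∀ s : Fin n → Fin n → Prop, IsWeakOrder s →
        ∑ i, u i * (copeland s i : ℝ) ≤ ∑ i, u i * (copeland r i : ℝ)) ↔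
    (∀ i j, u i > u j → copeland r i > copeland r j) := by
  have hsorted : 2 * ∑ i, u i * (copeland (fun i j => u j ≤ u i) i : ℝ) =
      ∑ i, ∑ j, |u i - u j| :=
    (two_mul_sum_mul_copeland_eq_iff u _).2 fun i j h =>
      netPref_eq_one_iff.2 ⟨h.le, h.not_ge⟩
  have hrespects : (∀ i j, u i > u j → copeland r i > copeland r j) ↔
      2 * ∑ i, u i * (copeland r i : ℝ) = ∑ i, ∑ j, |u i - u j| := by
    simp only [two_mul_sum_mul_copeland_eq_iff, netPref_eq_one_iff_copeland_lt hr, gt_iff_lt]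
  rw [hrespects]
  constructor
  · intro hmax
    have := hmax _ (isWeakOrder_ge_comp u)
    linarith [two_mul_sum_mul_copeland_le u r]
  · intro heq s _
    linarith [two_mul_sum_mul_copeland_le u s]
end

section
/- (Theorem 1) A weak order ρ solves the weak quadratic assignment problem maximize ∑_i ∑_j r_{ij}(ρ(i) - ρ(j)) over all weak orders on X if and only if for all i, j, t_i > t_j implies ρ(i) > ρ(j), where t_i = ∑_j (r_{ij} - r_{ji}). -/
/-!
Writing `tᵢ = ∑ₖ (rᵢₖ - rₖᵢ)`, the objective is linear in the Copeland indices: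
`∑ᵢ ∑ⱼ rᵢⱼ (ρ(i) - ρ(j)) = ∑ᵢ tᵢ ρ(i)`. Expanding `ρ(i) = ∑ⱼ σᵢⱼ` with the strict-preference
sign `σᵢⱼ ∈ {-1, 0, 1}` of the pair and symmetrizing, twice the objective is
`∑ᵢ ∑ⱼ (tᵢ - tⱼ) σᵢⱼ ≤ ∑ᵢ ∑ⱼ |tᵢ - tⱼ|`. The bound is attained, by ordering the alternatives
by `t`, and a weak order attains it exactly when it strictly prefers `i` to `j` whenever
`tᵢ > tⱼ`; for a weak order, strict preference is the same as a larger Copeland index.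
-/

open Finset

section NetFlow

variable {ι α : Type*} [Fintype ι]

def netFlow [AddCommGroup α] (R : ι → ι → α) (i : ι) : α :=
  ∑ k, (R i k - R k i)

theorem sum_sum_mul_sub_eq_sum_netFlow_mul [CommRing α] (R : ι → ι → α) (f : ι → α) :
    ∑ i, ∑ j, R i j * (f i - f j) = ∑ i, netFlow R i * f i := by
  simp only [netFlow, mul_sub, sum_sub_distrib, sum_mul, sub_mul]
  rw [sum_comm (f := fun i j => R i j * f j)]

theorem two_mul_sum_sum_mul_of_antisymm [CommRing α] (t : ι → α) (g : ι → ι → α)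
    (hg : ∀ i j, g j i = -g i j) :
    2 * ∑ i, ∑ j, t i * g i j = ∑ i, ∑ j, (t i - t j) * g i j := by
  have hswap : ∑ i, ∑ j, t j * g i j = -∑ i, ∑ j, t i * g i j := by
    rw [sum_comm]
    simp only [← sum_neg_distrib, ← mul_neg, ← hg]
  simp only [sub_mul, sum_sub_distrib, hswap]
  ring

end NetFlow

section RelSign

variable {ι α : Type*} [CommRing α] [LinearOrder α] [IsStrictOrderedRing α] (s : ι → ι → Prop)

open Classical in
noncomputable def relSign (i j : ι) : ℤ :=
  (if s i j then 1 else 0) - (if s j i then 1 else 0)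

theorem relSign_swap (i j : ι) : relSign s j i = -relSign s i j := by
  unfold relSign
  ring

theorem relSign_eq_one_iff {i j : ι} : relSign s i j = 1 ↔ s i j ∧ ¬ s j i := by
  unfold relSign
  split_ifs <;> simp_all

theorem mul_relSign_le_abs (x : α) (i j : ι) : x * relSign s i j ≤ |x| := by
  unfold relSign
  split_ifs <;> simp [le_abs_self, neg_le_abs]

variable [Fintype ι]

theorem sum_sum_mul_relSign_le (t : ι → α) :
    ∑ i, ∑ j, (t i - t j) * relSign s i j ≤ ∑ i, ∑ j, |t i - t j| :=
  sum_le_sum fun i _ => sum_le_sum fun j _ => mul_relSign_le_abs s _ i j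

theorem sum_sum_mul_relSign_eq_iff (t : ι → α) :
    ∑ i, ∑ j, (t i - t j) * relSign s i j = ∑ i, ∑ j, |t i - t j| ↔
      ∀ i j, t j < t i → s i j ∧ ¬ s j i := by
  have hterm : ∀ i, ∑ j, (t i - t j) * relSign s i j ≤ ∑ j, |t i - t j| :=
    fun i => sum_le_sum fun j _ => mul_relSign_le_abs s _ i j
  rw [sum_eq_sum_iff_of_le fun i _ => hterm i]
  simp only [sum_eq_sum_iff_of_le fun j _ => mul_relSign_le_abs s _ _ j, mem_univ, true_implies]
  constructor
  · intro h i j hji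
    have hij := h i j
    rw [abs_of_pos (sub_pos.2 hji), mul_eq_left₀ (sub_pos.2 hji).ne'] at hij
    exact (relSign_eq_one_iff s).1 (by exact_mod_cast hij)
  · intro h i j
    rcases lt_trichotomy (t i) (t j) with hlt | heq | hgt
    · rw [relSign_swap, (relSign_eq_one_iff s).2 (h j i hlt), abs_of_neg (sub_neg.2 hlt)]
      push_cast
      ring
    · simp [heq]
    · rw [(relSign_eq_one_iff s).2 (h i j hgt), abs_of_pos (sub_pos.2 hgt)]
      push_cast
      ring

end RelSign

section Copeland

variable {n : ℕ}

theorem copeland_eq_sum_relSign (s : Fin n → Fin n → Prop) (i : Fin n) :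
    copeland s i = ∑ j, relSign s i j := by
  classical
  simp only [copeland, relSign, sum_sub_distrib, Set.ncard_eq_toFinset_card', Set.toFinset_ofPred,
    natCast_card_filter]

theorem isWeakOrder_of_le {β : Type*} [LinearOrder β] (t : Fin n → β) :
    IsWeakOrder fun i j => t j ≤ t i :=
  ⟨fun _ _ => le_total _ _, fun _ _ _ hij hjk => hjk.trans hij⟩

namespace IsWeakOrder

variable {s : Fin n → Fin n → Prop}

theorem copeland_le_copeland (hs : IsWeakOrder s) {i j : Fin n} (hij : s i j) :
    copeland s j ≤ copeland s i := by
  have hup : {k | s j k} ⊆ {k | s i k} := fun k hjk => hs.2 hij hjk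
  have hdown : {k | s k i} ⊆ {k | s k j} := fun k hki => hs.2 hki hij
  have := Set.ncard_le_ncard hup
  have := Set.ncard_le_ncard hdown
  unfold copeland
  omega

theorem copeland_lt_copeland (hs : IsWeakOrder s) {i j : Fin n} (hij : s i j) (hji : ¬ s j i) :
    copeland s j < copeland s i := by
  have hup : {k | s j k} ⊂ {k | s i k} :=
    Set.ssubset_iff_of_subset (fun k hjk => hs.2 hij hjk) |>.2
      ⟨i, (hs.1 i i).elim id id, hji⟩
  have hdown : {k | s k i} ⊆ {k | s k j} := fun k hki => hs.2 hki hij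
  have := Set.ncard_lt_ncard hup
  have := Set.ncard_le_ncard hdown
  unfold copeland
  omega

theorem copeland_lt_copeland_iff (hs : IsWeakOrder s) {i j : Fin n} :
    copeland s j < copeland s i ↔ s i j ∧ ¬ s j i := by
  refine ⟨fun h => ⟨?_, fun hji => (hs.copeland_le_copeland hji).not_gt h⟩,
    fun h => hs.copeland_lt_copeland h.1 h.2⟩
  exact (hs.1 i j).resolve_right fun hji => (hs.copeland_le_copeland hji).not_gt h

end IsWeakOrder

noncomputable def assignmentValue (R : Fin n → Fin n → ℝ) (s : Fin n → Fin n → Prop) : ℝ :=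
  ∑ i, ∑ j, R i j * ((copeland s i : ℝ) - (copeland s j : ℝ))

theorem two_mul_assignmentValue (R : Fin n → Fin n → ℝ) (s : Fin n → Fin n → Prop) :
    2 * assignmentValue R s =
      ∑ i, ∑ j, (netFlow R i - netFlow R j) * relSign s i j := by
  rw [assignmentValue, sum_sum_mul_sub_eq_sum_netFlow_mul,
    ← two_mul_sum_sum_mul_of_antisymm _ _ fun i j => by simp [relSign_swap s i j]]
  simp only [copeland_eq_sum_relSign, Int.cast_sum, mul_sum]

end Copeland

/-- Theorem 1: a weak order solves the weak quadratic assignment problem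
`maximize ∑ i ∑ j r_{ij}(ρ(i) - ρ(j))` iff `tᵢ > tⱼ` implies `ρ(i) > ρ(j)`,
where `tᵢ = ∑ j (r_{ij} - r_{ji})`. -/
theorem stmt3 (n : ℕ) (R : Fin n → Fin n → ℝ) (r : Fin n → Fin n → Prop)
    (hr : IsWeakOrder r) :
    (∀ s : Fin n → Fin n → Prop, IsWeakOrder s →
        ∑ i, ∑ j, R i j * ((copeland s i : ℝ) - (copeland s j : ℝ)) ≤
          ∑ i, ∑ j, R i j * ((copeland r i : ℝ) - (copeland r j : ℝ))) ↔
    (∀ i j, (∑ k, (R i k - R k i)) > (∑ k, (R j k - R k j)) →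
        copeland r i > copeland r j) := by
  set t := netFlow R
  set M := ∑ i, ∑ j, |t i - t j|
  have hle : ∀ s, 2 * assignmentValue R s ≤ M := fun s =>
    (two_mul_assignmentValue R s).trans_le (sum_sum_mul_relSign_le s t)
  have heq : ∀ s, 2 * assignmentValue R s = M ↔ ∀ i j, t j < t i → s i j ∧ ¬ s j i :=
    fun s => by rw [two_mul_assignmentValue]; exact sum_sum_mul_relSign_eq_iff s t
  have hr_opt : 2 * assignmentValue R r = M ↔ ∀ i j, t j < t i → copeland r j < copeland r i := by
    simp only [heq, hr.copeland_lt_copeland_iff]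
  change (∀ s, IsWeakOrder s → assignmentValue R s ≤ assignmentValue R r) ↔
    ∀ i j, t j < t i → copeland r j < copeland r i
  rw [← hr_opt]
  refine ⟨fun hmax => le_antisymm (hle r) ?_, fun hr_max s _ => by linarith [hle s]⟩
  have h_by_t : 2 * assignmentValue R (fun i j => t j ≤ t i) = M :=
    (heq _).2 fun _ _ h => ⟨h.le, not_le.2 h⟩
  linarith [hmax _ (isWeakOrder_of_le t)]
end

section
/- Suppose ρ is a weak order in which X_k and X_ℓ are tied (ρ(k) = ρ(ℓ)), and let X_{kℓ} = {X_j : ρ(j) = ρ(k)} \ {X_k, X_ℓ}. Form ρ' by removing from ρ the pair (X_ℓ, X_k) and the pairs (X_j, X_k) and (X_ℓ, X_j) for all X_j in X_{kℓ}. Then ρ' is a weak order with ρ'(k) = ρ(k) + |X_{kℓ}| + 1, ρ'(ℓ) = ρ(ℓ) − |X_{kℓ}| − 1, ρ'(i) = ρ(i) for all other i, and ∑_i ρ(i)u_i − ∑_i ρ'(i)u_i = (u_ℓ − u_k)(|X_{kℓ}| + 1). -/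
/-! On the tie class of `k` and `ℓ`, `ρ'` reorders `ρ`: `k` moves to the top of the class, `ℓ`
to its bottom, and the other members stay tied in between. Breaking the ties of a weak order by
an integer level `f` always gives a weak order, and it changes the Copeland index of `i` by the
number of alternatives tied with `i` that `f` puts below `i`, minus the number it puts above.
For the level `1` at `k`, `-1` at `ℓ` and `0` elsewhere, `k` gains `|X_{kℓ}| + 1`, `ℓ` loses as much,
and every other member of the class gains `ℓ` and loses `k`; so only the indices of `k` and `ℓ`
move, which gives the change of the weighted sum. -/

variable {n : ℕ}

section Copeland

variable {r : Fin n → Fin n → Prop}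

theorem copeland_eq_of_le {r' : Fin n → Fin n → Prop} (h : r' ≤ r) (i : Fin n) :
    copeland r' i = copeland r i - ({j | r i j} \ {j | r' i j} : Set (Fin n)).ncard +
      ({j | r j i} \ {j | r' j i} : Set (Fin n)).ncard := by
  have hout := Set.ncard_sdiff_add_ncard_of_subset (s := {j | r' i j}) (t := {j | r i j})
    fun j => h i j
  have hin := Set.ncard_sdiff_add_ncard_of_subset (s := {j | r' j i}) (t := {j | r j i})
    fun j => h j i
  unfold copeland
  omega

namespace IsWeakOrder

variable (hr : IsWeakOrder r)
include hr

theorem refl (i : Fin n) : r i i := (hr.1 i i).elim id id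

theorem copeland_eq_of_tied {i j : Fin n} (hij : r i j) (hji : r j i) :
    copeland r i = copeland r j := by
  have hout : {m | r i m} = {m | r j m} := by
    ext m; exact ⟨hr.2 hji, hr.2 hij⟩
  have hin : {m | r m i} = {m | r m j} := by
    ext m; exact ⟨(hr.2 · hij), (hr.2 · hji)⟩
  rw [copeland, copeland, hout, hin]

theorem copeland_lt_of_not_le {i j : Fin n} (hij : r i j) (hji : ¬r j i) :
    copeland r j < copeland r i := by
  have hout : {m | r j m} ⊂ {m | r i m} :=
    ⟨fun m => hr.2 hij, fun hsub => hji (hsub (hr.refl i))⟩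
  have hin : {m | r m i} ⊂ {m | r m j} :=
    ⟨fun m hm => hr.2 hm hij, fun hsub => hji (hsub (hr.refl j))⟩
  have hout_lt := Set.ncard_lt_ncard hout
  have hin_lt := Set.ncard_lt_ncard hin
  unfold copeland
  omega

theorem copeland_eq_iff {i j : Fin n} : copeland r i = copeland r j ↔ r i j ∧ r j i := by
  refine ⟨fun h => ?_, fun h => hr.copeland_eq_of_tied h.1 h.2⟩
  rcases hr.1 i j with hij | hji
  · exact ⟨hij, by_contra fun hji => (hr.copeland_lt_of_not_le hij hji).ne h.symm⟩
  · exact ⟨by_contra fun hij => (hr.copeland_lt_of_not_le hji hij).ne h, hji⟩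

end IsWeakOrder

def breakTies (r : Fin n → Fin n → Prop) (f : Fin n → ℤ) : Fin n → Fin n → Prop :=
  fun a b => r a b ∧ ¬(r b a ∧ f a < f b)

theorem IsWeakOrder.breakTies (hr : IsWeakOrder r) (f : Fin n → ℤ) :
    IsWeakOrder (breakTies r f) := by
  refine ⟨fun a b => ?_, fun a b c hab hbc => ⟨hr.2 hab.1 hbc.1, fun ⟨hca, hac⟩ => ?_⟩⟩
  · have := hr.1 a b
    have := lt_asymm (a := f a) (b := f b)
    unfold _root_.breakTies
    tauto
  · have hba : r b a := hr.2 hbc.1 hca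
    have hcb : r c b := hr.2 hca hab.1
    have hfab : f b ≤ f a := not_lt.1 fun h => hab.2 ⟨hba, h⟩
    have hfbc : f c ≤ f b := not_lt.1 fun h => hbc.2 ⟨hcb, h⟩
    omega

theorem copeland_breakTies (f : Fin n → ℤ) (i : Fin n) :
    copeland (breakTies r f) i = copeland r i -
      ({j | r i j ∧ r j i ∧ f i < f j} : Set (Fin n)).ncard +
      ({j | r i j ∧ r j i ∧ f j < f i} : Set (Fin n)).ncard := by
  rw [copeland_eq_of_le fun a b h => h.1]
  congr 4 <;> ext j <;> simp only [_root_.breakTies, Set.mem_sdiff, Set.mem_ofPred_eq] <;> tauto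

end Copeland

section MoveApart

variable {r : Fin n → Fin n → Prop} {k l : Fin n}

-- the set `X_{kℓ}` of the paper
def tiedOthers (r : Fin n → Fin n → Prop) (k l : Fin n) : Set (Fin n) :=
  {j | copeland r j = copeland r k ∧ j ≠ k ∧ j ≠ l}

def apartLevel (k l j : Fin n) : ℤ := if j = k then 1 else if j = l then -1 else 0

def moveApart (r : Fin n → Fin n → Prop) (k l : Fin n) : Fin n → Fin n → Prop :=
  breakTies r (apartLevel k l)

theorem ncard_tied_ne_eq (hr : IsWeakOrder r) (hkl : k ≠ l)
    (htie : copeland r k = copeland r l) :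
    ({j | r k j ∧ r j k ∧ j ≠ k} : Set (Fin n)).ncard = (tiedOthers r k l).ncard + 1 := by
  have htied := hr.copeland_eq_iff.1 htie
  rw [← Set.ncard_insert_of_notMem (a := l) (by simp [tiedOthers])]
  congr 1
  ext j
  simp only [tiedOthers, Set.mem_insert_iff, Set.mem_ofPred_eq, hr.copeland_eq_iff]
  by_cases hj : j = l
  · subst hj; tauto
  · tauto

theorem copeland_moveApart_left (hr : IsWeakOrder r) (hkl : k ≠ l)
    (htie : copeland r k = copeland r l) :
    copeland (moveApart r k l) k = copeland r k + (tiedOthers r k l).ncard + 1 := by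
  have hup : ({j | r k j ∧ r j k ∧ apartLevel k l k < apartLevel k l j} : Set (Fin n)) =
      ∅ := by
    ext j; by_cases hjk : j = k <;> by_cases hjl : j = l <;> simp_all [apartLevel, hkl.symm]
  have hdown : ({j | r k j ∧ r j k ∧ apartLevel k l j < apartLevel k l k} : Set (Fin n)) =
      {j | r k j ∧ r j k ∧ j ≠ k} := by
    ext j; by_cases hjk : j = k <;> by_cases hjl : j = l <;> simp_all [apartLevel, hkl.symm]
  rw [moveApart, copeland_breakTies, hup, hdown, ncard_tied_ne_eq hr hkl htie,
    Set.ncard_empty]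
  push_cast
  ring

theorem copeland_moveApart_right (hr : IsWeakOrder r) (hkl : k ≠ l)
    (htie : copeland r k = copeland r l) :
    copeland (moveApart r k l) l = copeland r l - (tiedOthers r k l).ncard - 1 := by
  have hup : ({j | r l j ∧ r j l ∧ apartLevel k l l < apartLevel k l j} : Set (Fin n)) =
      {j | r l j ∧ r j l ∧ j ≠ l} := by
    ext j; by_cases hjk : j = k <;> by_cases hjl : j = l <;> simp_all [apartLevel, hkl.symm]
  have hdown : ({j | r l j ∧ r j l ∧ apartLevel k l j < apartLevel k l l} : Set (Fin n)) =
      ∅ := by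
    ext j; by_cases hjk : j = k <;> by_cases hjl : j = l <;> simp_all [apartLevel, hkl.symm]
  have hS : tiedOthers r l k = tiedOthers r k l := by
    ext j; simp only [tiedOthers, Set.mem_ofPred_eq, htie]; tauto
  rw [moveApart, copeland_breakTies, hup, hdown, ncard_tied_ne_eq hr hkl.symm htie.symm, hS,
    Set.ncard_empty]
  push_cast
  ring

theorem copeland_moveApart_of_ne (hr : IsWeakOrder r) (hkl : k ≠ l)
    (htie : copeland r k = copeland r l) {i : Fin n} (hik : i ≠ k) (hil : i ≠ l) :
    copeland (moveApart r k l) i = copeland r i := by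
  have hup : ({j | r i j ∧ r j i ∧ apartLevel k l i < apartLevel k l j} : Set (Fin n)) =
      {j | r i j ∧ r j i ∧ j = k} := by
    ext j; by_cases hjk : j = k <;> by_cases hjl : j = l <;> simp_all [apartLevel]
  have hdown : ({j | r i j ∧ r j i ∧ apartLevel k l j < apartLevel k l i} : Set (Fin n)) =
      {j | r i j ∧ r j i ∧ j = l} := by
    ext j; by_cases hjk : j = k <;> by_cases hjl : j = l <;> simp_all [apartLevel, hkl.symm]
  have htied : (r i k ∧ r k i) ↔ (r i l ∧ r l i) := by
    rw [← hr.copeland_eq_iff, ← hr.copeland_eq_iff, htie]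
  have hcount : ({j | r i j ∧ r j i ∧ j = k} : Set (Fin n)).ncard =
      ({j | r i j ∧ r j i ∧ j = l} : Set (Fin n)).ncard :=
    Set.ncard_congr (fun _ _ => l) (by rintro _ ⟨hi, hk, rfl⟩; simpa using htied.1 ⟨hi, hk⟩)
      (by simp_all) (by rintro _ ⟨hi, hl, rfl⟩; simpa using htied.2 ⟨hi, hl⟩)
  rw [moveApart, copeland_breakTies, hup, hdown, hcount]
  ring

theorem moveApart_iff (hr : IsWeakOrder r) (hkl : k ≠ l) (htie : copeland r k = copeland r l)
    {a b : Fin n} :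
    moveApart r k l a b ↔
      r a b ∧ ¬(a = l ∧ b = k) ∧ ¬(b = k ∧ a ∈ tiedOthers r k l) ∧
        ¬(a = l ∧ b ∈ tiedOthers r k l) := by
  obtain ⟨hkl', hlk⟩ := hr.copeland_eq_iff.1 htie
  have htied_l {b : Fin n} (hlb : r l b) : r b l ↔ r b k ∧ r k b :=
    ⟨fun hbl => ⟨hr.2 hbl hlk, hr.2 hkl' hlb⟩, fun h => hr.2 h.1 hkl'⟩
  simp only [moveApart, breakTies, tiedOthers, Set.mem_ofPred_eq, hr.copeland_eq_iff]
  by_cases hak : a = k <;> by_cases hal : a = l <;> by_cases hbk : b = k <;>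
    by_cases hbl : b = l <;> simp_all [apartLevel, hkl.symm]

end MoveApart

/-- "Moving apart" two tied alternatives `k, ℓ` in a weak order: removing the pair
`(ℓ,k)` and the pairs `(j,k)`, `(ℓ,j)` for all `j` tied with them yields a weak
order `r'` with `ρ'(k) = ρ(k) + |S| + 1`, `ρ'(ℓ) = ρ(ℓ) - |S| - 1`, other indices
unchanged, and the stated change in the objective. -/
theorem stmt5 (n : ℕ) (u : Fin n → ℝ) (r : Fin n → Fin n → Prop) (hr : IsWeakOrder r)
    (k l : Fin n) (hkl : k ≠ l)
    (htie : copeland r k = copeland r l) :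
    let S : Set (Fin n) := {j | copeland r j = copeland r k ∧ j ≠ k ∧ j ≠ l}
    let r' : Fin n → Fin n → Prop := fun a b =>
      r a b ∧ ¬(a = l ∧ b = k) ∧ ¬(b = k ∧ a ∈ S) ∧ ¬(a = l ∧ b ∈ S)
    IsWeakOrder r' ∧
    copeland r' k = copeland r k + S.ncard + 1 ∧
    copeland r' l = copeland r l - S.ncard - 1 ∧
    (∀ i, i ≠ k → i ≠ l → copeland r' i = copeland r i) ∧
    (∑ i, (copeland r i : ℝ) * u i) - (∑ i, (copeland r' i : ℝ) * u i) =
      (u l - u k) * ((S.ncard : ℝ) + 1) := by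
  intro S r'
  have hr' : r' = moveApart r k l := funext₂ fun a b => propext (moveApart_iff hr hkl htie).symm
  have hk : copeland (moveApart r k l) k = copeland r k + S.ncard + 1 :=
    copeland_moveApart_left hr hkl htie
  have hl : copeland (moveApart r k l) l = copeland r l - S.ncard - 1 :=
    copeland_moveApart_right hr hkl htie
  have hother (i : Fin n) (hik : i ≠ k) (hil : i ≠ l) :=
    copeland_moveApart_of_ne hr hkl htie hik hil
  rw [hr']
  refine ⟨hr.breakTies _, hk, hl, hother, ?_⟩
  rw [← Finset.sum_sub_distrib,
    Fintype.sum_eq_add k l hkl fun i hi => by rw [hother i hi.1 hi.2, sub_self], hk, hl]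
  push_cast
  ring
end

section
/- (Theorem 2) For any real n×n matrix R there exists β_0 > 0 such that for every β with 0 < β < β_0, every weak order ρ* minimizing ∑_{(i,j,p)} (r_{ij}^p − β(ρ(i) − ρ(j)))² over all weak orders ρ satisfies: t_i > t_j implies ρ*(i) > ρ*(j). -/
open scoped Classical

/-- An array of `m` incomplete paired comparison `n × n` matrices: `defined p i j`
says that the entry `r_{ij}^p` is defined, in which case its value is `val p i j`.
Whenever `r_{ij}^p` is defined so is `r_{ji}^p`, and there are no self-comparisons. -/
structure PCArray (n m : ℕ) where
  defined : Fin m → Fin n → Fin n → Prop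
  val : Fin m → Fin n → Fin n → ℝ
  defined_symm : ∀ p i j, defined p i j → defined p j i
  defined_irrefl : ∀ p i, ¬ defined p i i

/-- The β-Least-Squares objective `∑_{(i,j,p) defined} (r_{ij}^p - β(ρ(i) - ρ(j)))²`. -/
noncomputable def lsObj {n m : ℕ} (P : PCArray n m) (β : ℝ)
    (r : Fin n → Fin n → Prop) : ℝ :=
  ∑ p, ∑ i, ∑ j, if P.defined p i j then
    (P.val p i j - β * ((copeland r i : ℝ) - (copeland r j : ℝ))) ^ 2 else 0

/-- The Copeland score `tᵢ = ∑ j (r_{ij} - r_{ji})` of `Xᵢ` in the array,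
where `r_{ij} = ∑_p r_{ij}^p` over defined entries. -/
noncomputable def tScore {n m : ℕ} (P : PCArray n m) (i : Fin n) : ℝ :=
  ∑ j, ((∑ p, if P.defined p i j then P.val p i j else 0) -
        (∑ p, if P.defined p j i then P.val p j i else 0))

namespace Stmt6Aux
variable {n m : ℕ}

lemma wo_refl {r : Fin n → Fin n → Prop} (h : IsWeakOrder r) (i : Fin n) : r i i :=
  (h.1 i i).elim id id

lemma cop_rev (r : Fin n → Fin n → Prop) (x : Fin n) :
    copeland (fun a b => r b a) x = - copeland r x := by
  simp only [copeland]; ring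

lemma wo_rev {r : Fin n → Fin n → Prop} (h : IsWeakOrder r) :
    IsWeakOrder (fun a b => r b a) :=
  ⟨fun i j => (h.1 j i), fun _ _ _ hab hbc => h.2 hbc hab⟩

lemma cop_lt {r : Fin n → Fin n → Prop} (h : IsWeakOrder r) {i j : Fin n}
    (hij : r i j) (hji : ¬ r j i) : copeland r j < copeland r i := by
  have h1 : ({b | r j b} : Set (Fin n)) ⊂ {b | r i b} := by
    rw [Set.ssubset_iff_subset_ne]
    refine ⟨fun b hb => h.2 hij hb, fun he => hji ?_⟩
    have : i ∈ ({b | r i b} : Set (Fin n)) := wo_refl h i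
    rw [← he] at this; exact this
  have h2 : ({b | r b i} : Set (Fin n)) ⊂ {b | r b j} := by
    rw [Set.ssubset_iff_subset_ne]
    refine ⟨fun b hb => h.2 hb hij, fun he => hji ?_⟩
    have : j ∈ ({b | r b j} : Set (Fin n)) := wo_refl h j
    rw [← he] at this; exact this
  have n1 := Set.ncard_lt_ncard h1 (Set.toFinite _)
  have n2 := Set.ncard_lt_ncard h2 (Set.toFinite _)
  simp only [copeland]; omega

lemma same_class {r : Fin n → Fin n → Prop} (h : IsWeakOrder r) {i j : Fin n}
    (hc : copeland r i = copeland r j) : r i j ∧ r j i := by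
  rcases h.1 i j with hij | hji
  · refine ⟨hij, ?_⟩
    by_contra hji
    exact absurd hc (by have := cop_lt h hij hji; omega)
  · refine ⟨?_, hji⟩
    by_contra hij
    exact absurd hc (by have := cop_lt h hji hij; omega)

lemma cop_perm (r : Fin n → Fin n → Prop) (σ : Equiv.Perm (Fin n)) (x : Fin n) :
    copeland (fun a b => r (σ a) (σ b)) x = copeland r (σ x) := by
  have key : ∀ s : Set (Fin n), ((⇑σ) ⁻¹' s).ncard = s.ncard := fun s =>
    Set.ncard_preimage_of_injective_subset_range σ.injective
      (by simp [Equiv.range_eq_univ])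
  have h1 : ({b | r (σ x) (σ b)} : Set (Fin n)) = (⇑σ) ⁻¹' {b | r (σ x) b} := rfl
  have h2 : ({b | r (σ b) (σ x)} : Set (Fin n)) = (⇑σ) ⁻¹' {b | r b (σ x)} := rfl
  simp only [copeland, h1, h2, key]

lemma wo_perm {r : Fin n → Fin n → Prop} (h : IsWeakOrder r) (σ : Equiv.Perm (Fin n)) :
    IsWeakOrder (fun a b => r (σ a) (σ b)) :=
  ⟨fun i j => h.1 (σ i) (σ j), fun _ _ _ hab hbc => h.2 hab hbc⟩

lemma sum_two {i j : Fin n} (hij : i ≠ j) (f : Fin n → ℝ)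
    (h : ∀ x, x ≠ i → x ≠ j → f x = 0) : ∑ x, f x = f i + f j := by
  rw [← Finset.sum_pair hij]
  refine (Finset.sum_subset (Finset.subset_univ _) fun x _ hx => ?_).symm
  simp only [Finset.mem_insert, Finset.mem_singleton, not_or] at hx
  exact h x hx.1 hx.2

/-- Move `i` strictly above the rest of its indifference class. -/
def promote (r : Fin n → Fin n → Prop) (i : Fin n) : Fin n → Fin n → Prop :=
  fun a b => r a b ∧ ¬(b = i ∧ a ≠ i ∧ r i a)

/-- Move `j` strictly below the rest of its indifference class. -/
def demote (r : Fin n → Fin n → Prop) (j : Fin n) : Fin n → Fin n → Prop :=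
  fun a b => promote (fun x y => r y x) j b a

lemma wo_promote {r : Fin n → Fin n → Prop} (h : IsWeakOrder r) (i : Fin n) :
    IsWeakOrder (promote r i) := by
  constructor
  · intro a b
    by_cases hbi : b = i
    · subst hbi
      by_cases hai : a = b
      · subst hai; exact Or.inl ⟨wo_refl h a, fun hc => hc.2.1 rfl⟩
      · by_cases hia : r b a
        · exact Or.inr ⟨hia, fun hc => hc.2.1 rfl⟩
        · exact Or.inl ⟨(h.1 a b).resolve_right hia, fun hc => hia hc.2.2⟩
    · by_cases hai : a = i
      · subst hai
        by_cases hab : r a b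
        · exact Or.inl ⟨hab, fun hc => hbi hc.1⟩
        · exact Or.inr ⟨(h.1 a b).resolve_left hab, fun hc => hab hc.2.2⟩
      · rcases h.1 a b with hab | hba
        · exact Or.inl ⟨hab, fun hc => hbi hc.1⟩
        · exact Or.inr ⟨hba, fun hc => hai hc.1⟩
  · rintro a b c ⟨hab, nab⟩ ⟨hbc, nbc⟩
    refine ⟨h.2 hab hbc, ?_⟩
    rintro ⟨rfl, hai, hia⟩
    by_cases hbi : b = c
    · subst hbi; exact nab ⟨rfl, hai, hia⟩
    · exact nbc ⟨rfl, hbi, h.2 hia hab⟩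

lemma wo_demote {r : Fin n → Fin n → Prop} (h : IsWeakOrder r) (j : Fin n) :
    IsWeakOrder (demote r j) := wo_rev (wo_promote (wo_rev h) j)

lemma cop_promote {r : Fin n → Fin n → Prop} (h : IsWeakOrder r) (i x : Fin n) :
    copeland (promote r i) x = copeland r x +
      (if x = i then (({y | r i y ∧ r y i} : Set (Fin n)).ncard : ℤ) - 1
       else if r i x ∧ r x i then -1 else 0) := by
  set T : Set (Fin n) := {y | r i y ∧ r y i} with hT
  by_cases hx : x = i
  · subst hx
    set A : Set (Fin n) := {b | r b x ∧ ¬ r x b} with hA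
    have hD : ({b | promote r x x b} : Set (Fin n)) = {b | r x b} := by
      ext b; simp [promote]
    have hU : ({b | promote r x b x} : Set (Fin n)) = insert x A := by
      ext b
      constructor
      · rintro ⟨hbx, hn⟩
        by_cases hb : b = x
        · exact Or.inl hb
        · exact Or.inr ⟨hbx, fun hxb => hn ⟨rfl, hb, hxb⟩⟩
      · intro hb
        rcases hb with rfl | hbA
        · exact ⟨wo_refl h b, fun hc => hc.2.1 rfl⟩
        · exact ⟨hbA.1, fun hc => hbA.2 hc.2.2⟩
    have hUsplit : ({b | r b x} : Set (Fin n)) = T ∪ A := by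
      ext b; simp only [Set.mem_setOf_eq, Set.mem_union, hT, hA]; tauto
    have hdisj : Disjoint T A := by
      rw [Set.disjoint_left]; rintro b ⟨hb1, _⟩ ⟨_, hb3⟩; exact hb3 hb1
    have hcardU : ({b | r b x} : Set (Fin n)).ncard = T.ncard + A.ncard := by
      rw [hUsplit, Set.ncard_union_eq hdisj (Set.toFinite _) (Set.toFinite _)]
    have hxA : x ∉ A := by simp only [hA, Set.mem_setOf_eq]; intro hc; exact hc.2 hc.1
    have hcardI : (insert x A).ncard = A.ncard + 1 :=
      Set.ncard_insert_of_notMem hxA (Set.toFinite _)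
    simp only [copeland, hD, hU, hcardI, if_pos rfl]
    push_cast
    omega
  · by_cases hxT : r i x ∧ r x i
    · have hD : ({b | promote r i x b} : Set (Fin n)) = {b | r x b} \ {i} := by
        ext b
        simp only [promote, Set.mem_setOf_eq, Set.mem_diff, Set.mem_singleton_iff]
        constructor
        · rintro ⟨hxb, hn⟩; exact ⟨hxb, fun hb => hn ⟨hb, hx, hxT.1⟩⟩
        · rintro ⟨hxb, hb⟩; exact ⟨hxb, fun hc => hb hc.1⟩
      have hU : ({b | promote r i b x} : Set (Fin n)) = {b | r b x} := by
        ext b; simp [promote, hx]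
      have hiD : i ∈ ({b | r x b} : Set (Fin n)) := hxT.2
      have hcard : ({b | r x b} \ {i} : Set (Fin n)).ncard
          = ({b | r x b} : Set (Fin n)).ncard - 1 :=
        Set.ncard_diff_singleton_of_mem hiD
      have hpos : 0 < ({b | r x b} : Set (Fin n)).ncard :=
        (Set.ncard_pos (Set.toFinite _)).mpr ⟨i, hiD⟩
      simp only [copeland, hD, hU, hcard, if_neg hx, if_pos hxT]
      omega
    · have hD : ({b | promote r i x b} : Set (Fin n)) = {b | r x b} := by
        ext b
        simp only [promote, Set.mem_setOf_eq, and_iff_left_iff_imp]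
        rintro hxb ⟨rfl, _, hix⟩
        exact hxT ⟨hix, hxb⟩
      have hU : ({b | promote r i b x} : Set (Fin n)) = {b | r b x} := by
        ext b; simp [promote, hx]
      simp only [copeland, hD, hU, if_neg hx, if_neg hxT]
      omega

lemma cop_demote {r : Fin n → Fin n → Prop} (h : IsWeakOrder r) (j x : Fin n) :
    copeland (demote r j) x = copeland r x -
      (if x = j then (({y | r j y ∧ r y j} : Set (Fin n)).ncard : ℤ) - 1
       else if r j x ∧ r x j then -1 else 0) := by
  have h1 : copeland (demote r j) x = - copeland (promote (fun a b => r b a) j) x := by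
    have : demote r j = fun a b => (promote (fun x y => r y x) j) b a := rfl
    rw [this, cop_rev]
  rw [h1, cop_promote (wo_rev h) j x, cop_rev]
  have hset : ({y | (fun a b => r b a) j y ∧ (fun a b => r b a) y j} : Set (Fin n))
      = {y | r j y ∧ r y j} := by
    ext y; simp only [Set.mem_setOf_eq]; tauto
  rw [hset]
  by_cases hx : x = j
  · simp only [if_pos hx]; ring
  · simp only [if_neg hx]
    by_cases hc : r j x ∧ r x j
    · simp only [if_pos hc,
        if_pos (show (fun a b => r b a) j x ∧ (fun a b => r b a) x j from ⟨hc.2, hc.1⟩)]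
      ring
    · simp only [if_neg hc,
        if_neg (show ¬((fun a b => r b a) j x ∧ (fun a b => r b a) x j) from
          fun hh => hc ⟨hh.2, hh.1⟩)]
      ring

noncomputable def Gf (P : PCArray n m) (r : Fin n → Fin n → Prop) : ℝ :=
  ∑ i, tScore P i * (copeland r i : ℝ)

noncomputable def Hf (P : PCArray n m) (r : Fin n → Fin n → Prop) : ℝ :=
  ∑ p, ∑ i, ∑ j, if P.defined p i j then
    ((copeland r i : ℝ) - (copeland r j : ℝ)) ^ 2 else 0

noncomputable def Af (P : PCArray n m) : ℝ :=
  ∑ p, ∑ i, ∑ j, if P.defined p i j then (P.val p i j) ^ 2 else 0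

lemma middle_sum (P : PCArray n m) (r : Fin n → Fin n → Prop) :
    (∑ p, ∑ i, ∑ j, if P.defined p i j then
      P.val p i j * ((copeland r i : ℝ) - (copeland r j : ℝ)) else 0) = Gf P r := by
  set c : Fin n → ℝ := fun i => (copeland r i : ℝ) with hc
  set a : Fin n → Fin n → ℝ := fun i j => ∑ p, if P.defined p i j then P.val p i j else 0
    with ha
  have step1 : (∑ p, ∑ i, ∑ j, if P.defined p i j then P.val p i j * (c i - c j) else 0)
      = ∑ i, ∑ j, a i j * (c i - c j) := by
    rw [Finset.sum_comm]
    refine Finset.sum_congr rfl fun i _ => ?_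
    rw [Finset.sum_comm]
    refine Finset.sum_congr rfl fun j _ => ?_
    rw [ha]
    simp only []
    rw [Finset.sum_mul]
    refine Finset.sum_congr rfl fun p _ => ?_
    split <;> ring
  rw [step1]
  have step2 : (∑ i, ∑ j, a i j * (c i - c j))
      = (∑ i, ∑ j, a i j * c i) - ∑ i, ∑ j, a i j * c j := by
    rw [← Finset.sum_sub_distrib]
    refine Finset.sum_congr rfl fun i _ => ?_
    rw [← Finset.sum_sub_distrib]
    refine Finset.sum_congr rfl fun j _ => ?_
    ring
  rw [step2]
  have step3 : (∑ i, ∑ j, a i j * c j) = ∑ i, ∑ j, a j i * c i := Finset.sum_comm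
  rw [step3]
  rw [← Finset.sum_sub_distrib]
  refine Finset.sum_congr rfl fun i _ => ?_
  rw [← Finset.sum_sub_distrib]
  have : tScore P i = ∑ j, (a i j - a j i) := rfl
  rw [this, Finset.sum_mul]
  refine Finset.sum_congr rfl fun j _ => ?_
  ring

lemma lsObj_eq (P : PCArray n m) (β : ℝ) (r : Fin n → Fin n → Prop) :
    lsObj P β r = Af P - 2 * β * Gf P r + β ^ 2 * Hf P r := by
  have key : ∀ (p : Fin m) (i j : Fin n),
      (if P.defined p i j then
        (P.val p i j - β * ((copeland r i : ℝ) - (copeland r j : ℝ))) ^ 2 else 0)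
      = (if P.defined p i j then (P.val p i j) ^ 2 else 0)
        - 2 * β * (if P.defined p i j then
            P.val p i j * ((copeland r i : ℝ) - (copeland r j : ℝ)) else 0)
        + β ^ 2 * (if P.defined p i j then
            ((copeland r i : ℝ) - (copeland r j : ℝ)) ^ 2 else 0) := by
    intro p i j; split <;> ring
  unfold lsObj
  simp only [key]
  simp only [Finset.sum_add_distrib, Finset.sum_sub_distrib, ← Finset.mul_sum]
  rw [middle_sum]
  rfl

end Stmt6Aux

open Stmt6Aux in
/-- Theorem 2: for small enough `β > 0`, every weak order minimizing the β-LS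
objective preserves the strict order of the Copeland scores `tᵢ`. -/
theorem stmt6 (n m : ℕ) (P : PCArray n m) :
    ∃ β₀ > (0 : ℝ), ∀ β : ℝ, 0 < β → β < β₀ →
      ∀ r : Fin n → Fin n → Prop, IsWeakOrder r →
        (∀ s : Fin n → Fin n → Prop, IsWeakOrder s → lsObj P β r ≤ lsObj P β s) →
        ∀ i j, tScore P i > tScore P j → copeland r i > copeland r j := by
  classical
  set S : Finset (Fin n → Fin n → Prop) := Finset.univ.filter IsWeakOrder with hS
  have hmemS : ∀ r, IsWeakOrder r → r ∈ S := fun r hr => by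
    simp [hS, hr]
  set V : Finset ℝ := S.image (Gf P) with hV
  set D : Finset ℝ := ((V ×ˢ V).image (fun q => q.2 - q.1)).filter (fun x => 0 < x) with hD
  set δ : ℝ := if hne : D.Nonempty then D.min' hne else 1 with hδdef
  have hδpos : 0 < δ := by
    rw [hδdef]; split
    · next hne => exact (Finset.mem_filter.mp (D.min'_mem hne)).2
    · exact one_pos
  have hδle : ∀ r s, IsWeakOrder r → IsWeakOrder s → Gf P r < Gf P s →
      δ ≤ Gf P s - Gf P r := by
    intro r s hr hs hlt
    have hmem : Gf P s - Gf P r ∈ D := by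
      rw [hD]
      refine Finset.mem_filter.mpr ⟨?_, show (0:ℝ) < Gf P s - Gf P r by linarith⟩
      refine Finset.mem_image.mpr ⟨(Gf P r, Gf P s), ?_, rfl⟩
      exact Finset.mem_product.mpr ⟨Finset.mem_image.mpr ⟨r, hmemS r hr, rfl⟩,
        Finset.mem_image.mpr ⟨s, hmemS s hs, rfl⟩⟩
    have hne : D.Nonempty := ⟨_, hmem⟩
    rw [hδdef, dif_pos hne]
    exact D.min'_le _ hmem
  set Hb : ℝ := (∑ r ∈ S, |Hf P r|) + 1 with hHb
  have hHb0 : 0 < Hb := by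
    have h0 : 0 ≤ ∑ r ∈ S, |Hf P r| := Finset.sum_nonneg fun _ _ => abs_nonneg _
    rw [hHb]; linarith
  have hHble : ∀ r, IsWeakOrder r → |Hf P r| < Hb := by
    intro r hr
    have h1 : |Hf P r| ≤ ∑ s ∈ S, |Hf P s| :=
      Finset.single_le_sum (f := fun s => |Hf P s|) (fun s _ => abs_nonneg _) (hmemS r hr)
    rw [hHb]; linarith
  refine ⟨δ / Hb, div_pos hδpos hHb0, ?_⟩
  intro β hβ0 hββ r hr hmin i j htij
  -- Step 1: `r` maximizes `Gf` over weak orders.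
  have hmax : ∀ s, IsWeakOrder s → Gf P s ≤ Gf P r := by
    intro s hs
    by_contra hlt
    push_neg at hlt
    have hle := hmin s hs
    rw [lsObj_eq, lsObj_eq] at hle
    have h1 : 2 * β * (Gf P s - Gf P r) ≤ β ^ 2 * (Hf P s - Hf P r) := by nlinarith [hle]
    have h2 : δ ≤ Gf P s - Gf P r := hδle r s hr hs hlt
    have h3 : |Hf P s| < Hb := hHble s hs
    have h4 : |Hf P r| < Hb := hHble r hr
    have h5 : Hf P s - Hf P r ≤ 2 * Hb := by
      have a1 := le_abs_self (Hf P s)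
      have a2 := neg_abs_le (Hf P r)
      linarith
    have hβHb : β * Hb < δ := by
      calc β * Hb < (δ / Hb) * Hb := by nlinarith
        _ = δ := by field_simp
    nlinarith [h1, h2, h5, hβHb, hβ0, sq_nonneg β]
  -- Step 2: a `Gf`-maximizer respects the strict `tScore` order.
  have hij : i ≠ j := fun he => by rw [he] at htij; exact lt_irrefl _ htij
  by_contra hcop
  push_neg at hcop
  rcases lt_or_eq_of_le hcop with hlt | heq
  · -- case copeland r i < copeland r j : swap i and j
    have hws : IsWeakOrder (fun a b => r (Equiv.swap i j a) (Equiv.swap i j b)) :=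
      wo_perm hr (Equiv.swap i j)
    have hGs := hmax _ hws
    have h0 : Gf P (fun a b => r (Equiv.swap i j a) (Equiv.swap i j b)) - Gf P r
        = ∑ x, tScore P x * ((copeland r (Equiv.swap i j x) : ℝ) - (copeland r x : ℝ)) := by
      unfold Gf
      rw [← Finset.sum_sub_distrib]
      refine Finset.sum_congr rfl fun x _ => ?_
      rw [cop_perm]
      ring
    have h1 : (∑ x, tScore P x * ((copeland r (Equiv.swap i j x) : ℝ) - (copeland r x : ℝ)))
        = tScore P i * ((copeland r j : ℝ) - (copeland r i : ℝ))
          + tScore P j * ((copeland r i : ℝ) - (copeland r j : ℝ)) := by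
      rw [sum_two hij
        (fun x => tScore P x * ((copeland r (Equiv.swap i j x) : ℝ) - (copeland r x : ℝ)))
        (fun x hxi hxj => by
          show tScore P x * ((copeland r (Equiv.swap i j x) : ℝ) - (copeland r x : ℝ)) = 0
          rw [Equiv.swap_apply_of_ne_of_ne hxi hxj]; ring)]
      show tScore P i * ((copeland r (Equiv.swap i j i) : ℝ) - (copeland r i : ℝ))
          + tScore P j * ((copeland r (Equiv.swap i j j) : ℝ) - (copeland r j : ℝ)) = _
      rw [Equiv.swap_apply_left, Equiv.swap_apply_right]
    have hcc : (copeland r i : ℝ) < (copeland r j : ℝ) := by exact_mod_cast hlt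
    nlinarith [hGs, h0, h1, htij, hcc]
  · -- case copeland r i = copeland r j : promote i / demote j
    have hclass := same_class hr heq
    have hw1 := wo_promote hr i
    have hw2 := wo_demote hr j
    have hG1 := hmax _ hw1
    have hG2 := hmax _ hw2
    have hTset : ({y | r j y ∧ r y j} : Set (Fin n)) = {y | r i y ∧ r y i} := by
      ext y
      simp only [Set.mem_setOf_eq]
      exact ⟨fun hy => ⟨hr.2 hclass.1 hy.1, hr.2 hy.2 hclass.2⟩,
        fun hy => ⟨hr.2 hclass.2 hy.1, hr.2 hy.2 hclass.1⟩⟩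
    set N : ℕ := ({y | r i y ∧ r y i} : Set (Fin n)).ncard with hN
    have hN1 : 1 ≤ N := by
      have hiT : i ∈ ({y | r i y ∧ r y i} : Set (Fin n)) := ⟨wo_refl hr i, wo_refl hr i⟩
      have := (Set.ncard_pos (Set.toFinite _)).mpr ⟨i, hiT⟩
      omega
    have hcomb : ∀ x, ((copeland (promote r i) x : ℝ) - (copeland r x : ℝ))
        + ((copeland (demote r j) x : ℝ) - (copeland r x : ℝ))
        = if x = i then (N : ℝ) else if x = j then -(N : ℝ) else 0 := by
      intro x
      have e1 := cop_promote hr i x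
      have e2 := cop_demote hr j x
      rw [hTset] at e2
      by_cases hxi : x = i
      · subst hxi
        rw [if_pos rfl] at e1
        rw [if_neg hij, if_pos ⟨hclass.2, hclass.1⟩] at e2
        rw [if_pos rfl]
        rw [e1, e2]
        push_cast
        ring
      · rw [if_neg hxi] at e1 ⊢
        by_cases hxj : x = j
        · subst hxj
          rw [if_pos rfl] at e2
          rw [if_pos ⟨hclass.1, hclass.2⟩] at e1
          rw [if_pos rfl]
          rw [e1, e2]
          push_cast
          ring
        · rw [if_neg hxj] at e2 ⊢
          by_cases hxT : r i x ∧ r x i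
          · rw [if_pos hxT] at e1
            rw [if_pos (show r j x ∧ r x j from
              ⟨hr.2 hclass.2 hxT.1, hr.2 hxT.2 hclass.1⟩)] at e2
            rw [e1, e2]
            push_cast
            ring
          · rw [if_neg hxT] at e1
            rw [if_neg (show ¬(r j x ∧ r x j) from
              fun hh => hxT ⟨hr.2 hclass.1 hh.1, hr.2 hh.2 hclass.2⟩)] at e2
            rw [e1, e2]
            push_cast
            ring
    have hsum : (Gf P (promote r i) - Gf P r) + (Gf P (demote r j) - Gf P r)
        = (tScore P i - tScore P j) * (N : ℝ) := by
      unfold Gf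
      rw [← Finset.sum_sub_distrib, ← Finset.sum_sub_distrib, ← Finset.sum_add_distrib]
      have hstep : ∀ x : Fin n, (tScore P x * (copeland (promote r i) x : ℝ)
            - tScore P x * (copeland r x : ℝ))
          + (tScore P x * (copeland (demote r j) x : ℝ)
            - tScore P x * (copeland r x : ℝ))
          = tScore P x * (if x = i then (N : ℝ) else if x = j then -(N : ℝ) else 0) := by
        intro x
        rw [← hcomb x]
        ring
      rw [Finset.sum_congr rfl fun x _ => hstep x]
      rw [sum_two hij (fun x => tScore P x *
          (if x = i then (N : ℝ) else if x = j then -(N : ℝ) else 0))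
        (fun x hxi hxj => by
          show tScore P x * (if x = i then (N : ℝ) else if x = j then -(N : ℝ) else 0) = 0
          rw [if_neg hxi, if_neg hxj]; ring)]
      show tScore P i * (if i = i then (N : ℝ) else if i = j then -(N : ℝ) else 0)
          + tScore P j * (if j = i then (N : ℝ) else if j = j then -(N : ℝ) else 0)
          = (tScore P i - tScore P j) * (N : ℝ)
      rw [if_pos rfl, if_neg (Ne.symm hij), if_pos rfl]
      ring
    have hNpos : (1 : ℝ) ≤ (N : ℝ) := by exact_mod_cast hN1
    nlinarith [hG1, hG2, hsum, htij, hNpos]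
end

section
/- (Theorem 4, cyclic case) Let n ≥ 3 and consider a 3-cycle of maximal wins: X_1 beats X_2, X_2 beats X_3, X_3 beats X_1 (each a maximal win), with no other comparisons. Then no linear order on X satisfies the Self-Consistency axiom for this profile; hence any strict aggregating operator (one always outputting linear orders) violates Self-Consistency. -/
open scoped Classical

/-- A linear order: an antisymmetric weak order. -/
def IsLinearOrderRel {n : ℕ} (r : Fin n → Fin n → Prop) : Prop :=
  IsWeakOrder r ∧ ∀ i j, r i j → r j i → i = j

/-- An array of `m` incomplete paired comparison `n × n` matrices with entries in
`[rmin, rmax]`: `defined p i j` says that the entry `r_{ij}^p` is defined, in which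
case its value is `val p i j`. -/
structure Profile (rmin rmax : ℝ) (n m : ℕ) where
  defined : Fin m → Fin n → Fin n → Prop
  val : Fin m → Fin n → Fin n → ℝ
  defined_symm : ∀ p i j, defined p i j → defined p j i
  defined_irrefl : ∀ p i, ¬ defined p i i
  val_mem : ∀ p i j, defined p i j → rmin ≤ val p i j ∧ val p i j ≤ rmax

variable {rmin rmax : ℝ} {n m : ℕ}

/-- The comparison outcomes of alternative `i`: indices `(p, k)` such that the
comparison of `Xᵢ` with `X_k` in the `p`-th matrix is defined. -/
def Out (P : Profile rmin rmax n m) (i : Fin n) : Type :=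
  {x : Fin m × Fin n // P.defined x.1 i x.2}

/-- Outcome `o` of `Xᵢ` is not weaker, w.r.t. the scores `w`, than outcome `o'` of
`Xⱼ`: `r_{ik}^p ≥ r_{jℓ}^q`, `r_{ki}^p ≤ r_{ℓj}^q`, and the opponent of `o` is
ranked at least as high as the opponent of `o'`. -/
def NotWeaker (P : Profile rmin rmax n m) (w : Fin n → ℝ) {i j : Fin n}
    (o : Out P i) (o' : Out P j) : Prop :=
  P.val o.1.1 i o.1.2 ≥ P.val o'.1.1 j o'.1.2 ∧
  P.val o.1.1 o.1.2 i ≤ P.val o'.1.1 o'.1.2 j ∧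
  w o.1.2 ≥ w o'.1.2

/-- Outcome `o` of `Xᵢ` is stronger than outcome `o'` of `Xⱼ` w.r.t. `w`:
not weaker, and at least one of the three relations is strict. -/
def Stronger (P : Profile rmin rmax n m) (w : Fin n → ℝ) {i j : Fin n}
    (o : Out P i) (o' : Out P j) : Prop :=
  NotWeaker P w o o' ∧
    (P.val o.1.1 i o.1.2 > P.val o'.1.1 j o'.1.2 ∨
     P.val o.1.1 o.1.2 i < P.val o'.1.1 o'.1.2 j ∨
     w o.1.2 > w o'.1.2)

/-- Self-Consistency of the ranking given by the scores `w` for the profile `P`: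
whenever there is a one-to-one correspondence between the comparison outcomes of
`Xᵢ` and those of `Xⱼ` under which each outcome of `Xᵢ` is not weaker than the
corresponding outcome of `Xⱼ`, then `Xᵢ` is ranked at least as high as `Xⱼ`;
strictly higher if moreover some outcome of `Xᵢ` is stronger. -/
def SelfConsistentAt (P : Profile rmin rmax n m) (w : Fin n → ℝ) : Prop :=
  ∀ i j : Fin n, ∀ e : Out P i ≃ Out P j,
    (∀ o : Out P i, NotWeaker P w o (e o)) →
      w i ≥ w j ∧ ((∃ o : Out P i, Stronger P w o (e o)) → w i > w j)

/-- `o` is a maximal win: the outcome is `(rmax, rmin)`. -/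
def IsMaxWin (P : Profile rmin rmax n m) {i : Fin n} (o : Out P i) : Prop :=
  P.val o.1.1 i o.1.2 = rmax ∧ P.val o.1.1 o.1.2 i = rmin

/-- `o` is a maximal loss: the outcome is `(rmin, rmax)`. -/
def IsMaxLoss (P : Profile rmin rmax n m) {i : Fin n} (o : Out P i) : Prop :=
  P.val o.1.1 i o.1.2 = rmin ∧ P.val o.1.1 o.1.2 i = rmax

/-- Self-Consistent Monotonicity (SCM) of the ranking given by the scores `w`:
if the outcome sets split as `R_i = R_i' ∪ R_i''`, `R_j = R_j' ∪ R_j''` where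
`R_i''` consists of maximal wins, `R_j''` of maximal losses, and a one-to-one
correspondence `R_i' → R_j'` matches each outcome of `Xᵢ` with a not-weaker one of
`Xⱼ`, then `Xᵢ` is ranked at least as high as `Xⱼ`; strictly higher if moreover
some matched outcome is stronger, or `R_i'' ≠ ∅`, or `R_j'' ≠ ∅`. -/
def SCM (P : Profile rmin rmax n m) (w : Fin n → ℝ) : Prop :=
  ∀ i j : Fin n, ∀ (A : Set (Out P i)) (B : Set (Out P j)),
    (∀ o : Out P i, o ∉ A → IsMaxWin P o) →
    (∀ o : Out P j, o ∉ B → IsMaxLoss P o) →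
    ∀ e : A ≃ B, (∀ o : A, NotWeaker P w o.1 (e o).1) →
      w i ≥ w j ∧
      (((∃ o : A, Stronger P w o.1 (e o).1) ∨
          (∃ o : Out P i, o ∉ A) ∨ (∃ o : Out P j, o ∉ B)) → w i > w j)

lemma cop_strict {n : ℕ} {r : Fin n → Fin n → Prop} (h : IsLinearOrderRel r)
    {i j : Fin n} (hij : i ≠ j) (hrij : r i j) : copeland r j < copeland r i := by
  obtain ⟨⟨hcomp, htrans⟩, hanti⟩ := h
  have hji : ¬ r j i := fun hji => hij (hanti i j hrij hji)
  have h1 : {k | r j k} ⊂ {k | r i k} := by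
    refine ⟨fun k hk => htrans hrij hk, fun hsub => ?_⟩
    exact hji (hsub (show r i i from (hcomp i i).elim id id))
  have h2 : {k | r k i} ⊂ {k | r k j} := by
    refine ⟨fun k hk => htrans hk hrij, fun hsub => ?_⟩
    exact hji (hsub (show r j j from (hcomp j j).elim id id))
  have c1 := Set.ncard_lt_ncard h1 (Set.toFinite _)
  have c2 := Set.ncard_lt_ncard h2 (Set.toFinite _)
  unfold copeland
  omega

lemma gen_sc {rmin rmax : ℝ} {n : ℕ} (P : Profile rmin rmax n 1)
    (w : Fin n → ℝ) (hsc : SelfConsistentAt P w)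
    (i si pi j sj pj : Fin n)
    (hdi : ∀ x, P.defined 0 i x ↔ (x = si ∨ x = pi))
    (hdj : ∀ x, P.defined 0 j x ↔ (x = sj ∨ x = pj))
    (hip : si ≠ pi) (hjp : sj ≠ pj)
    (hvi1 : P.val 0 i si = rmax) (hvi2 : P.val 0 si i = rmin)
    (hvi3 : P.val 0 i pi = rmin) (hvi4 : P.val 0 pi i = rmax)
    (hvj1 : P.val 0 j sj = rmax) (hvj2 : P.val 0 sj j = rmin)
    (hvj3 : P.val 0 j pj = rmin) (hvj4 : P.val 0 pj j = rmax)
    (h1 : w si ≥ w sj) (h2 : w pi ≥ w pj) :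
    w i ≥ w j ∧ ((w si > w sj ∨ w pi > w pj) → w i > w j) := by
  have hp0 : ∀ p : Fin 1, p = 0 := fun p => Subsingleton.elim p 0
  have memsj : P.defined (0 : Fin 1) j sj := (hdj sj).mpr (Or.inl rfl)
  have mempj : P.defined (0 : Fin 1) j pj := (hdj pj).mpr (Or.inr rfl)
  have memsi : P.defined (0 : Fin 1) i si := (hdi si).mpr (Or.inl rfl)
  have mempi : P.defined (0 : Fin 1) i pi := (hdi pi).mpr (Or.inr rfl)
  let e : Out P i ≃ Out P j :=
  { toFun := fun o => ⟨(0, if o.1.2 = si then sj else pj), by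
      dsimp only; split
      · exact memsj
      · exact mempj⟩
    invFun := fun o => ⟨(0, if o.1.2 = sj then si else pi), by
      dsimp only; split
      · exact memsi
      · exact mempi⟩
    left_inv := by
      rintro ⟨⟨p, k⟩, hpk⟩
      obtain rfl := hp0 p
      rcases (hdi k).mp hpk with rfl | rfl
      · simp; rfl
      · simp [Ne.symm hip, Ne.symm hjp]; rfl
    right_inv := by
      rintro ⟨⟨p, k⟩, hpk⟩
      obtain rfl := hp0 p
      rcases (hdj k).mp hpk with rfl | rfl
      · simp; rfl
      · simp [Ne.symm hip, Ne.symm hjp]; rfl }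
  have hnw : ∀ o : Out P i, NotWeaker P w o (e o) := by
    rintro ⟨⟨p, k⟩, hpk⟩
    obtain rfl := hp0 p
    rcases (hdi k).mp hpk with rfl | rfl
    · have he : (e ⟨(0, k), hpk⟩).1 = (0, if k = k then sj else pj) := rfl
      simp [NotWeaker, he, hvi1, hvi2, hvj1, hvj2, h1]
    · have he : (e ⟨(0, k), hpk⟩).1 = (0, if k = si then sj else pj) := rfl
      simp [NotWeaker, he, Ne.symm hip, hvi3, hvi4, hvj3, hvj4, h2]
  obtain ⟨hge, hstr⟩ := hsc i j e hnw
  refine ⟨hge, fun hcase => hstr ?_⟩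
  rcases hcase with hc | hc
  · refine ⟨⟨(0, si), memsi⟩, hnw _, Or.inr (Or.inr ?_)⟩
    have he : (e ⟨(0, si), memsi⟩).1 = (0, if si = si then sj else pj) := rfl
    simpa [he] using hc
  · refine ⟨⟨(0, pi), mempi⟩, hnw _, Or.inr (Or.inr ?_)⟩
    have he : (e ⟨(0, pi), mempi⟩).1 = (0, if pi = si then sj else pj) := rfl
    simpa [he, Ne.symm hip] using hc

/-- Theorem 4 (cyclic case): for the 3-cycle of maximal wins
`X₁ → X₂ → X₃ → X₁` (no other comparisons), no linear order satisfies
Self-Consistency; hence every strict aggregating operator (one whose optimal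
orders are always linear) violates Self-Consistency. -/
theorem stmt8 (n : ℕ) (hn : 3 ≤ n) (rmin rmax : ℝ) (hr : rmin < rmax)
    (P : Profile rmin rmax n 1)
    (hd : ∀ p (i j : Fin n), P.defined p i j ↔
      ((i.val = 0 ∧ j.val = 1) ∨ (i.val = 1 ∧ j.val = 0) ∨
       (i.val = 1 ∧ j.val = 2) ∨ (i.val = 2 ∧ j.val = 1) ∨
       (i.val = 2 ∧ j.val = 0) ∨ (i.val = 0 ∧ j.val = 2)))
    (hv : ∀ p (i j : Fin n),
      (i.val = 0 ∧ j.val = 1) ∨ (i.val = 1 ∧ j.val = 2) ∨ (i.val = 2 ∧ j.val = 0) →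
      P.val p i j = rmax ∧ P.val p j i = rmin) :
    (∀ r : Fin n → Fin n → Prop, IsLinearOrderRel r →
        ¬ SelfConsistentAt P (fun i => (copeland r i : ℝ))) ∧
    (∀ F : Profile rmin rmax n 1 → Set (Fin n → Fin n → Prop),
        (∀ Q, (F Q).Nonempty) →
        (∀ Q r, r ∈ F Q → IsLinearOrderRel r) →
        ¬ (∀ Q, ∀ r ∈ F Q, SelfConsistentAt Q (fun i => (copeland r i : ℝ)))) := by
  have main : ∀ r : Fin n → Fin n → Prop, IsLinearOrderRel r →
      ¬ SelfConsistentAt P (fun i => (copeland r i : ℝ)) := by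
    intro r hlin hsc
    set w : Fin n → ℝ := fun i => (copeland r i : ℝ) with hw
    set i0 : Fin n := ⟨0, by omega⟩ with hi0
    set i1 : Fin n := ⟨1, by omega⟩ with hi1
    set i2 : Fin n := ⟨2, by omega⟩ with hi2
    have e0 : i0.val = 0 := rfl
    have e1 : i1.val = 1 := rfl
    have e2 : i2.val = 2 := rfl
    have d01 : i0 ≠ i1 := by simp [Fin.ext_iff, e0, e1]
    have d12 : i1 ≠ i2 := by simp [Fin.ext_iff, e1, e2]
    have d20 : i2 ≠ i0 := by simp [Fin.ext_iff, e2, e0]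
    have hd0 : ∀ x, P.defined 0 i0 x ↔ (x = i1 ∨ x = i2) := by
      intro x; rw [hd]; simp [Fin.ext_iff, e0, e1, e2]; try omega
    have hd1 : ∀ x, P.defined 0 i1 x ↔ (x = i2 ∨ x = i0) := by
      intro x; rw [hd]; simp [Fin.ext_iff, e0, e1, e2]; try omega
    have hd2 : ∀ x, P.defined 0 i2 x ↔ (x = i0 ∨ x = i1) := by
      intro x; rw [hd]; simp [Fin.ext_iff, e0, e1, e2]; try omega
    have v01 := hv 0 i0 i1 (Or.inl ⟨rfl, rfl⟩)
    have v12 := hv 0 i1 i2 (Or.inr (Or.inl ⟨rfl, rfl⟩))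
    have v20 := hv 0 i2 i0 (Or.inr (Or.inr ⟨rfl, rfl⟩))
    have H01 := gen_sc P w hsc i0 i1 i2 i1 i2 i0 hd0 hd1 d12 d20
      v01.1 v01.2 v20.2 v20.1 v12.1 v12.2 v01.2 v01.1
    have H10 := gen_sc P w hsc i1 i2 i0 i0 i1 i2 hd1 hd0 d20 d12
      v12.1 v12.2 v01.2 v01.1 v01.1 v01.2 v20.2 v20.1
    have H12 := gen_sc P w hsc i1 i2 i0 i2 i0 i1 hd1 hd2 d20 d01
      v12.1 v12.2 v01.2 v01.1 v20.1 v20.2 v12.2 v12.1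
    have H21 := gen_sc P w hsc i2 i0 i1 i1 i2 i0 hd2 hd1 d01 d20
      v20.1 v20.2 v12.2 v12.1 v12.1 v12.2 v01.2 v01.1
    have H20 := gen_sc P w hsc i2 i0 i1 i0 i1 i2 hd2 hd0 d01 d12
      v20.1 v20.2 v12.2 v12.1 v01.1 v01.2 v20.2 v20.1
    have H02 := gen_sc P w hsc i0 i1 i2 i2 i0 i1 hd0 hd2 d12 d01
      v01.1 v01.2 v20.2 v20.1 v20.1 v20.2 v12.2 v12.1
    have tri : ∀ i j : Fin n, i ≠ j → w i < w j ∨ w j < w i := by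
      intro i j hij
      rcases hlin.1.1 i j with h | h
      · right; simp only [hw]; exact_mod_cast cop_strict hlin hij h
      · left; simp only [hw]; exact_mod_cast cop_strict hlin (Ne.symm hij) h
    rcases tri i0 i1 d01 with t1 | t1 <;>
      rcases tri i1 i2 d12 with t2 | t2 <;>
      rcases tri i0 i2 (Ne.symm d20) with t3 | t3
    · -- a<b, b<c, a<c : c>b>a, use H02
      have := (H02 t1.le t2.le).2 (Or.inl t1)
      linarith
    · linarith
    · -- a<b, c<b, a<c : b>c>a, use H01
      have := (H01 t2.le t3.le).2 (Or.inl t2)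
      linarith
    · -- a<b, c<b, c<a : b>a>c, use H21
      have := (H21 t3.le t1.le).2 (Or.inl t3)
      linarith
    · -- b<a, b<c, a<c : c>a>b, use H12
      have := (H12 t3.le t1.le).2 (Or.inl t3)
      linarith
    · -- b<a, b<c, c<a : a>c>b, use H10
      have := (H10 t2.le t3.le).2 (Or.inl t2)
      linarith
    · linarith
    · -- b<a, c<b, c<a : a>b>c, use H20
      have := (H20 t1.le t2.le).2 (Or.inl t1)
      linarith
  refine ⟨main, fun F hne hlin hall => ?_⟩
  obtain ⟨r, hrF⟩ := hne P
  exact main r (hlin P r hrF) (hall P r hrF)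
end

section
/- (Theorem 4, symmetric case) Suppose the comparison data consist of exactly two comparisons between X_1 and X_2: one maximal win for X_1 and one maximal win for X_2, with no other comparisons. Then Self-Consistency forces X_1 ∼_ρ X_2 in every optimal weak order; in particular no linear (antisymmetric) order can be optimal under Self-Consistency. -/
open scoped Classical

variable {rmin rmax : ℝ} {n m : ℕ}

def sw2 : Fin 2 → Fin 2 := fun p => if p = 0 then 1 else 0

lemma sw2_inv : ∀ p, sw2 (sw2 p) = p := by decide

/-- Theorem 4 (symmetric case): if the data consist of exactly two comparisons
between `X₁` and `X₂` — one maximal win for each — then Self-Consistency forces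
`X₁ ∼ X₂` in every weak order satisfying it; in particular no linear
(antisymmetric) order satisfies Self-Consistency for this profile. -/
theorem stmt9 (n : ℕ) (hn : 2 ≤ n) (rmin rmax : ℝ) (hr : rmin < rmax)
    (P : Profile rmin rmax n 2) (a b : Fin n) (ha : a.val = 0) (hb : b.val = 1)
    (hd : ∀ p (i j : Fin n), P.defined p i j ↔ ((i = a ∧ j = b) ∨ (i = b ∧ j = a)))
    (hv0 : P.val 0 a b = rmax ∧ P.val 0 b a = rmin)
    (hv1 : P.val 1 a b = rmin ∧ P.val 1 b a = rmax) :
    (∀ r : Fin n → Fin n → Prop, IsWeakOrder r →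
        SelfConsistentAt P (fun i => (copeland r i : ℝ)) →
        copeland r a = copeland r b) ∧
    (∀ r : Fin n → Fin n → Prop, IsLinearOrderRel r →
        ¬ SelfConsistentAt P (fun i => (copeland r i : ℝ))) := by
  have hab : a ≠ b := by
    intro h; rw [h, hb] at ha; exact absurd ha one_ne_zero
  have hdab : ∀ p (j : Fin n), P.defined p a j ↔ j = b := by
    intro p j; rw [hd]
    constructor
    · rintro (⟨-, h⟩ | ⟨h, -⟩)
      · exact h
      · exact absurd h hab
    · intro h; exact Or.inl ⟨rfl, h⟩
  have hdba : ∀ p (j : Fin n), P.defined p b j ↔ j = a := by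
    intro p j; rw [hd]
    constructor
    · rintro (⟨h, -⟩ | ⟨-, h⟩)
      · exact absurd h.symm hab
      · exact h
    · intro h; exact Or.inr ⟨rfl, h⟩
  have hval : ∀ p : Fin 2, P.val p a b = P.val (sw2 p) b a ∧ P.val p b a = P.val (sw2 p) a b := by
    intro p; fin_cases p <;>
      simp [sw2, hv0.1, hv0.2, hv1.1, hv1.2]
  let eab : Out P a ≃ Out P b :=
    { toFun := fun o => ⟨(sw2 o.1.1, a), (hdba _ _).mpr rfl⟩
      invFun := fun o => ⟨(sw2 o.1.1, b), (hdab _ _).mpr rfl⟩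
      left_inv := fun o => Subtype.ext (Prod.ext (sw2_inv _) ((hdab _ _).mp o.2).symm)
      right_inv := fun o => Subtype.ext (Prod.ext (sw2_inv _) ((hdba _ _).mp o.2).symm) }
  let eba : Out P b ≃ Out P a := eab.symm
  have key : ∀ w : Fin n → ℝ, SelfConsistentAt P w → w a = w b := by
    intro w hsc
    rcases le_total (w a) (w b) with h1 | h1
    · -- apply SC from a to b
      have hnw : ∀ o : Out P a, NotWeaker P w o (eab o) := by
        intro o
        have hob : o.1.2 = b := (hdab _ _).mp o.2
        refine ⟨?_, ?_, ?_⟩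
        · show P.val o.1.1 a o.1.2 ≥ P.val (sw2 o.1.1) b a
          rw [hob, (hval o.1.1).1]
        · show P.val o.1.1 o.1.2 a ≤ P.val (sw2 o.1.1) a b
          rw [hob, (hval o.1.1).2]
        · show w o.1.2 ≥ w a
          rw [hob]; exact h1
      exact le_antisymm h1 ((hsc a b eab hnw).1)
    · -- apply SC from b to a
      have hnw : ∀ o : Out P b, NotWeaker P w o (eba o) := by
        intro o
        have hob : o.1.2 = a := (hdba _ _).mp o.2
        have hinv : (eba o).1 = (sw2 o.1.1, b) := by
          show (eab.symm o).1 = _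
          rfl
        refine ⟨?_, ?_, ?_⟩
        · show P.val o.1.1 b o.1.2 ≥ P.val (eba o).1.1 a (eba o).1.2
          rw [hinv, hob, (hval o.1.1).2]
        · show P.val o.1.1 o.1.2 b ≤ P.val (eba o).1.1 (eba o).1.2 a
          rw [hinv, hob, (hval o.1.1).1]
        · show w o.1.2 ≥ w (eba o).1.2
          rw [hinv, hob]; exact h1
      exact ((hsc b a eba hnw).1).antisymm h1
  have lin : ∀ r : Fin n → Fin n → Prop, IsLinearOrderRel r →
      copeland r a ≠ copeland r b := by
    rintro r ⟨⟨hcomp, htrans⟩, hanti⟩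
    have main : ∀ x y : Fin n, x ≠ y → r x y → copeland r y < copeland r x := by
      intro x y hxy hr
      have hxx : r x x := (hcomp x x).elim id id
      have hyy : r y y := (hcomp y y).elim id id
      have hnyx : ¬ r y x := fun h => hxy (hanti x y hr h)
      have h1 : ({j | r y j} : Set (Fin n)).ncard < ({j | r x j} : Set (Fin n)).ncard := by
        refine Set.ncard_lt_ncard ?_ (Set.toFinite _)
        refine lt_of_le_not_ge (fun j hj => htrans hr hj) ?_
        intro h
        exact hnyx (h hxx)
      have h2 : ({j | r j x} : Set (Fin n)).ncard < ({j | r j y} : Set (Fin n)).ncard := by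
        refine Set.ncard_lt_ncard ?_ (Set.toFinite _)
        refine lt_of_le_not_ge (fun j hj => htrans hj hr) ?_
        intro h
        exact hnyx (h hyy)
      simp only [copeland]
      omega
    intro h
    rcases hcomp a b with hr | hr
    · exact (main a b hab hr).ne' h
    · exact (main b a (Ne.symm hab) hr).ne h
  constructor
  · intro r _ hsc
    exact_mod_cast key _ hsc
  · intro r hl hsc
    exact lin r hl (by exact_mod_cast key _ hsc)
end

section
/- Consider the profile on n ≥ 4 alternatives with single comparisons: X_1 beats X_3, X_3 beats X_4, and X_2 beats X_4 (all maximal wins), and no other comparisons. Then any weak order ρ satisfying Self-Consistent Monotonicity must satisfy X_1 ≻_ρ X_2 ≻_ρ X_3 ≻_ρ X_4. -/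
open scoped Classical

variable {rmin rmax : ℝ} {n m : ℕ}

/-!
Each step applies SCM to one pair, matching at most one outcome on each side; every unmatched
outcome is a maximal win of the first alternative or a maximal loss of the second, and makes the
conclusion strict. With nothing matched, `X₁ ≻ X₄`. Matching the wins `X₁ → X₃` and `X₃ → X₄`
gives `X₁ ≻ X₃` (unless `X₃ ≺ X₄`, when this already follows). Matching the losses `X₃ ← X₁` and
`X₄ ← X₃` then gives `X₃ ≻ X₄`, which makes the win `X₁ → X₃` stronger than `X₂ → X₄`, so
`X₁ ≻ X₂`. Finally, matching `X₂ → X₄` with `X₃ → X₄` gives `X₂ ≻ X₃`.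
-/

section SCM

variable {P : Profile rmin rmax n m} {w : Fin n → ℝ} {i j : Fin n}

theorem IsMaxWin.notWeaker {o : Out P i} {o' : Out P j} (ho : IsMaxWin P o)
    (ho' : IsMaxWin P o') (hw : w o'.1.2 ≤ w o.1.2) : NotWeaker P w o o' :=
  ⟨by rw [ho.1, ho'.1], by rw [ho.2, ho'.2], hw⟩

theorem IsMaxWin.stronger {o : Out P i} {o' : Out P j} (ho : IsMaxWin P o)
    (ho' : IsMaxWin P o') (hw : w o'.1.2 < w o.1.2) : Stronger P w o o' :=
  ⟨ho.notWeaker ho' hw.le, Or.inr (Or.inr hw)⟩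

theorem IsMaxLoss.notWeaker {o : Out P i} {o' : Out P j} (ho : IsMaxLoss P o)
    (ho' : IsMaxLoss P o') (hw : w o'.1.2 ≤ w o.1.2) : NotWeaker P w o o' :=
  ⟨by rw [ho.1, ho'.1], by rw [ho.2, ho'.2], hw⟩

theorem SCM.lt_of_forall_isMaxWin_of_forall_isMaxLoss (h : SCM P w)
    (hi : ∀ o : Out P i, IsMaxWin P o) (hj : ∀ o : Out P j, IsMaxLoss P o) (o : Out P i) :
    w j < w i :=
  (h i j ∅ ∅ (fun o _ => hi o) (fun o _ => hj o)
    ((Equiv.Set.empty _).trans (Equiv.Set.empty _).symm)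
    (fun o => absurd o.2 (Set.notMem_empty _))).2 (Or.inr (Or.inl ⟨o, Set.notMem_empty o⟩))

theorem SCM.lt_of_notWeaker (h : SCM P w) {oi : Out P i} {oj : Out P j}
    (hi : ∀ o, o ≠ oi → IsMaxWin P o) (hj : ∀ o, o ≠ oj → IsMaxLoss P o)
    (hle : NotWeaker P w oi oj)
    (hlt : Stronger P w oi oj ∨ (∃ o, o ≠ oi) ∨ (∃ o, o ≠ oj)) : w j < w i := by
  refine (h i j {oi} {oj} hi hj (Equiv.ofUnique _ _) ?_).2 ?_
  · rintro ⟨o, rfl : o = oi⟩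
    exact hle
  · rcases hlt with hs | hne
    · exact Or.inl ⟨⟨oi, rfl⟩, hs⟩
    · exact Or.inr hne

end SCM

theorem Out.ext_opponent {P : Profile rmin rmax n 1} {i : Fin n} {o o' : Out P i}
    (h : o.1.2 = o'.1.2) : o = o' :=
  Subtype.ext (Prod.ext (Subsingleton.elim _ _) h)

structure IsChainProfile (P : Profile rmin rmax n 1) (a b c d : Fin n) : Prop where
  nodup : [a, b, c, d].Nodup
  defined_iff : ∀ p (i j : Fin n), P.defined p i j ↔
    ((i = a ∧ j = c) ∨ (i = c ∧ j = a) ∨ (i = c ∧ j = d) ∨ (i = d ∧ j = c) ∨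
      (i = b ∧ j = d) ∨ (i = d ∧ j = b))
  val_eq : ∀ p (i j : Fin n), (i = a ∧ j = c) ∨ (i = c ∧ j = d) ∨ (i = b ∧ j = d) →
    P.val p i j = rmax ∧ P.val p j i = rmin

namespace IsChainProfile

variable {P : Profile rmin rmax n 1} {a b c d : Fin n}

theorem opponent_of_a (hP : IsChainProfile P a b c d) (o : Out P a) : o.1.2 = c := by
  grind [hP.nodup, (hP.defined_iff _ _ _).1 o.2, List.nodup_cons]

theorem opponent_of_b (hP : IsChainProfile P a b c d) (o : Out P b) : o.1.2 = d := by
  grind [hP.nodup, (hP.defined_iff _ _ _).1 o.2, List.nodup_cons]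

theorem opponent_of_c (hP : IsChainProfile P a b c d) (o : Out P c) :
    o.1.2 = a ∨ o.1.2 = d := by
  grind [hP.nodup, (hP.defined_iff _ _ _).1 o.2, List.nodup_cons]

theorem opponent_of_d (hP : IsChainProfile P a b c d) (o : Out P d) :
    o.1.2 = c ∨ o.1.2 = b := by
  grind [hP.nodup, (hP.defined_iff _ _ _).1 o.2, List.nodup_cons]

theorem isMaxWin_of_a (hP : IsChainProfile P a b c d) (o : Out P a) : IsMaxWin P o := by
  simp only [IsMaxWin, hP.opponent_of_a o]
  exact hP.val_eq _ _ _ (Or.inl ⟨rfl, rfl⟩)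

theorem isMaxWin_of_b (hP : IsChainProfile P a b c d) (o : Out P b) : IsMaxWin P o := by
  simp only [IsMaxWin, hP.opponent_of_b o]
  exact hP.val_eq _ _ _ (Or.inr (Or.inr ⟨rfl, rfl⟩))

theorem isMaxWin_of_c (hP : IsChainProfile P a b c d) (o : Out P c) (h : o.1.2 ≠ a) :
    IsMaxWin P o := by
  simp only [IsMaxWin, (hP.opponent_of_c o).resolve_left h]
  exact hP.val_eq _ _ _ (Or.inr (Or.inl ⟨rfl, rfl⟩))

theorem isMaxLoss_of_c (hP : IsChainProfile P a b c d) (o : Out P c) (h : o.1.2 ≠ d) :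
    IsMaxLoss P o := by
  simp only [IsMaxLoss, (hP.opponent_of_c o).resolve_right h]
  exact (hP.val_eq _ _ _ (Or.inl ⟨rfl, rfl⟩)).symm

theorem isMaxLoss_of_d (hP : IsChainProfile P a b c d) (o : Out P d) : IsMaxLoss P o := by
  rcases hP.opponent_of_d o with h | h <;> simp only [IsMaxLoss, h]
  · exact (hP.val_eq _ _ _ (Or.inr (Or.inl ⟨rfl, rfl⟩))).symm
  · exact (hP.val_eq _ _ _ (Or.inr (Or.inr ⟨rfl, rfl⟩))).symm

theorem ranking (hP : IsChainProfile P a b c d) {w : Fin n → ℝ} (h : SCM P w) :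
    w b < w a ∧ w c < w b ∧ w d < w c := by
  have had : a ≠ d := by have := hP.nodup; simp_all
  let oac : Out P a := ⟨(0, c), (hP.defined_iff 0 a c).2 (by simp)⟩
  let obd : Out P b := ⟨(0, d), (hP.defined_iff 0 b d).2 (by simp)⟩
  let oca : Out P c := ⟨(0, a), (hP.defined_iff 0 c a).2 (by simp)⟩
  let ocd : Out P c := ⟨(0, d), (hP.defined_iff 0 c d).2 (by simp)⟩
  let odc : Out P d := ⟨(0, c), (hP.defined_iff 0 d c).2 (by simp)⟩
  have hca_cd : oca ≠ ocd := fun heq => had (congrArg (·.1.2) heq)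
  have hlose_c : ∀ o, o ≠ ocd → IsMaxLoss P o :=
    fun o ho => hP.isMaxLoss_of_c o fun hk => ho (Out.ext_opponent hk)
  have hDA : w d < w a := h.lt_of_forall_isMaxWin_of_forall_isMaxLoss hP.isMaxWin_of_a
    hP.isMaxLoss_of_d oac
  have hCA : w c < w a := by
    rcases lt_or_ge (w c) (w d) with hcd | hdc
    · exact hcd.trans hDA
    · exact h.lt_of_notWeaker (fun o _ => hP.isMaxWin_of_a o) hlose_c
        ((hP.isMaxWin_of_a oac).notWeaker (hP.isMaxWin_of_c ocd had.symm) hdc)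
        (Or.inr (Or.inr ⟨oca, hca_cd⟩))
  have hDC : w d < w c := h.lt_of_notWeaker (oi := oca) (oj := odc)
    (fun o ho => hP.isMaxWin_of_c o fun hk => ho (Out.ext_opponent hk))
    (fun o _ => hP.isMaxLoss_of_d o)
    ((hP.isMaxLoss_of_c oca had).notWeaker (hP.isMaxLoss_of_d odc) hCA.le)
    (Or.inr (Or.inl ⟨ocd, hca_cd.symm⟩))
  have hBA : w b < w a := h.lt_of_notWeaker (oj := obd) (fun o _ => hP.isMaxWin_of_a o)
    (fun o ho => absurd (Out.ext_opponent (hP.opponent_of_b o)) ho)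
    ((hP.isMaxWin_of_a oac).notWeaker (hP.isMaxWin_of_b obd) hDC.le)
    (Or.inl ((hP.isMaxWin_of_a oac).stronger (hP.isMaxWin_of_b obd) hDC))
  have hCB : w c < w b := h.lt_of_notWeaker (fun o _ => hP.isMaxWin_of_b o) hlose_c
    ((hP.isMaxWin_of_b obd).notWeaker (hP.isMaxWin_of_c ocd had.symm) le_rfl)
    (Or.inr (Or.inr ⟨oca, hca_cd⟩))
  exact ⟨hBA, hCB, hDC⟩

end IsChainProfile

theorem stmt10_general (n : ℕ) (rmin rmax : ℝ)
    (P : Profile rmin rmax n 1)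
    (a b c d : Fin n) (ha : a.val = 0) (hb : b.val = 1) (hc : c.val = 2) (hd4 : d.val = 3)
    (hdef : ∀ p (i j : Fin n), P.defined p i j ↔
      ((i = a ∧ j = c) ∨ (i = c ∧ j = a) ∨ (i = c ∧ j = d) ∨ (i = d ∧ j = c) ∨
       (i = b ∧ j = d) ∨ (i = d ∧ j = b)))
    (hv : ∀ p (i j : Fin n), (i = a ∧ j = c) ∨ (i = c ∧ j = d) ∨ (i = b ∧ j = d) →
      P.val p i j = rmax ∧ P.val p j i = rmin) :
    ∀ r : Fin n → Fin n → Prop, IsWeakOrder r →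
      SCM P (fun i => (copeland r i : ℝ)) →
      copeland r a > copeland r b ∧ copeland r b > copeland r c ∧
        copeland r c > copeland r d := by
  intro r _ hscm
  have hP : IsChainProfile P a b c d :=
    ⟨by simp [Fin.ext_iff, ha, hb, hc, hd4], hdef, hv⟩
  obtain ⟨hba, hcb, hdc⟩ := hP.ranking hscm
  exact ⟨by exact_mod_cast hba, by exact_mod_cast hcb, by exact_mod_cast hdc⟩

/-- For the profile with single maximal-win comparisons `X₁ → X₃`, `X₃ → X₄`,
`X₂ → X₄` (and no other comparisons) on `n ≥ 4` alternatives, every weak order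
satisfying Self-Consistent Monotonicity ranks `X₁ ≻ X₂ ≻ X₃ ≻ X₄`. -/
theorem stmt10 (n : ℕ) (hn : 4 ≤ n) (rmin rmax : ℝ) (hr : rmin < rmax)
    (P : Profile rmin rmax n 1)
    (a b c d : Fin n) (ha : a.val = 0) (hb : b.val = 1) (hc : c.val = 2) (hd4 : d.val = 3)
    (hdef : ∀ p (i j : Fin n), P.defined p i j ↔
      ((i = a ∧ j = c) ∨ (i = c ∧ j = a) ∨ (i = c ∧ j = d) ∨ (i = d ∧ j = c) ∨
       (i = b ∧ j = d) ∨ (i = d ∧ j = b)))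
    (hv : ∀ p (i j : Fin n), (i = a ∧ j = c) ∨ (i = c ∧ j = d) ∨ (i = b ∧ j = d) →
      P.val p i j = rmax ∧ P.val p j i = rmin) :
    ∀ r : Fin n → Fin n → Prop, IsWeakOrder r →
      SCM P (fun i => (copeland r i : ℝ)) →
      copeland r a > copeland r b ∧ copeland r b > copeland r c ∧
        copeland r c > copeland r d :=
  stmt10_general n rmin rmax P a b c d ha hb hc hd4 hdef hv
end

section
/- (Theorem 5) If n ≥ 3 and a nonstrict aggregating operator is indifferent to the degree of resulting preferences, then it violates Self-Consistent Monotonicity. -/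
open scoped Classical

variable {rmin rmax : ℝ} {n m : ℕ}

section Thm5Aux

/-- Score function: `2` on index 2, `1` on index 0, `0` elsewhere. -/
def sc3 {n : ℕ} (i : Fin n) : ℕ := if (i : ℕ) = 2 then 2 else if (i : ℕ) = 0 then 1 else 0

/-- The weak order induced by `sc3`. -/
def rOrd {n : ℕ} (i j : Fin n) : Prop := sc3 j ≤ sc3 i

lemma rOrd_weak {n : ℕ} : IsWeakOrder (rOrd (n := n)) :=
  ⟨fun _ _ => le_total _ _, fun _ _ _ h1 h2 => le_trans h2 h1⟩

lemma ncard_compl_card {α : Type*} [Fintype α] (s : Set α) :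
    sᶜ.ncard = Nat.card α - s.ncard := by
  have := Set.ncard_add_ncard_compl s (Set.toFinite s) (Set.toFinite _)
  omega

lemma cop_i0 {n : ℕ} (hn : 3 ≤ n) :
    copeland (rOrd (n := n)) ⟨0, by omega⟩ = (n : ℤ) - 3 := by
  have hset1 : {j : Fin n | rOrd (⟨0, by omega⟩ : Fin n) j}
      = ({(⟨2, by omega⟩ : Fin n)} : Set (Fin n))ᶜ := by
    ext j
    by_cases h2 : (j : ℕ) = 2 <;> by_cases h0 : (j : ℕ) = 0 <;>
      simp [rOrd, sc3, Fin.ext_iff, h2, h0] <;> omega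
  have hset2 : {j : Fin n | rOrd j (⟨0, by omega⟩ : Fin n)}
      = ({(⟨0, by omega⟩ : Fin n), (⟨2, by omega⟩ : Fin n)} : Set (Fin n)) := by
    ext j
    by_cases h2 : (j : ℕ) = 2 <;> by_cases h0 : (j : ℕ) = 0 <;>
      simp [rOrd, sc3, Fin.ext_iff, h2, h0] <;> omega
  have hne : (⟨0, by omega⟩ : Fin n) ≠ ⟨2, by omega⟩ := by simp [Fin.ext_iff]
  rw [copeland, hset1, hset2, ncard_compl_card, Set.ncard_singleton, Set.ncard_pair hne,
    Nat.card_eq_fintype_card, Fintype.card_fin]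
  have : ((n - 1 : ℕ) : ℤ) = (n : ℤ) - 1 := by
    rw [Nat.cast_sub (by omega)]; norm_num
  rw [this]; ring

lemma cop_i1 {n : ℕ} (hn : 3 ≤ n) :
    copeland (rOrd (n := n)) ⟨1, by omega⟩ = -2 := by
  have hset1 : {j : Fin n | rOrd (⟨1, by omega⟩ : Fin n) j}
      = (({(⟨0, by omega⟩ : Fin n), (⟨2, by omega⟩ : Fin n)} : Set (Fin n)))ᶜ := by
    ext j
    by_cases h2 : (j : ℕ) = 2 <;> by_cases h0 : (j : ℕ) = 0 <;>
      simp [rOrd, sc3, Fin.ext_iff, h2, h0] <;> omega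
  have hset2 : {j : Fin n | rOrd j (⟨1, by omega⟩ : Fin n)} = (Set.univ : Set (Fin n)) := by
    ext j
    by_cases h2 : (j : ℕ) = 2 <;> by_cases h0 : (j : ℕ) = 0 <;>
      simp [rOrd, sc3, Fin.ext_iff, h2, h0] <;> omega
  have hne : (⟨0, by omega⟩ : Fin n) ≠ ⟨2, by omega⟩ := by simp [Fin.ext_iff]
  rw [copeland, hset1, hset2, ncard_compl_card, Set.ncard_pair hne, Set.ncard_univ,
    Nat.card_eq_fintype_card, Fintype.card_fin]
  have : ((n - 2 : ℕ) : ℤ) = (n : ℤ) - 2 := by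
    rw [Nat.cast_sub (by omega)]; norm_num
  rw [this]; ring

lemma cop_i2 {n : ℕ} (hn : 3 ≤ n) :
    copeland (rOrd (n := n)) ⟨2, by omega⟩ = (n : ℤ) - 1 := by
  have hset1 : {j : Fin n | rOrd j (⟨2, by omega⟩ : Fin n)}
      = ({(⟨2, by omega⟩ : Fin n)} : Set (Fin n)) := by
    ext j
    by_cases h2 : (j : ℕ) = 2 <;> by_cases h0 : (j : ℕ) = 0 <;>
      simp [rOrd, sc3, Fin.ext_iff, h2, h0] <;> omega
  have hset2 : {j : Fin n | rOrd (⟨2, by omega⟩ : Fin n) j} = (Set.univ : Set (Fin n)) := by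
    ext j
    by_cases h2 : (j : ℕ) = 2 <;> by_cases h0 : (j : ℕ) = 0 <;>
      simp [rOrd, sc3, Fin.ext_iff, h2, h0] <;> omega
  rw [copeland, hset1, hset2, Set.ncard_singleton, Set.ncard_univ,
    Nat.card_eq_fintype_card, Fintype.card_fin]
  push_cast
  ring

/-- The profile where `X₀` beats `X₁` maximally in every matrix, and nothing else
is compared. -/
def Pex (rmin rmax : ℝ) (hr : rmin ≤ rmax) (n m : ℕ) : Profile rmin rmax n m where
  defined _ i j := ((i : ℕ) = 0 ∧ (j : ℕ) = 1) ∨ ((i : ℕ) = 1 ∧ (j : ℕ) = 0)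
  val _ i _ := if (i : ℕ) = 0 then rmax else rmin
  defined_symm := by tauto
  defined_irrefl := by rintro p i (⟨h1, h2⟩ | ⟨h1, h2⟩) <;> omega
  val_mem := by
    intro p i j _
    show rmin ≤ (if (i : ℕ) = 0 then rmax else rmin) ∧ (if (i : ℕ) = 0 then rmax else rmin) ≤ rmax
    split <;> exact ⟨by linarith, by linarith⟩

end Thm5Aux

/-- Theorem 5: if `n ≥ 3` and a nonstrict aggregating operator is indifferent to
the degree of resulting preferences, then it violates Self-Consistent
Monotonicity. -/
theorem stmt11 (n m : ℕ) (hn : 3 ≤ n) (hm : 1 ≤ m) (rmin rmax : ℝ) (hr : rmin < rmax)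
    (F : Profile rmin rmax n m → Set (Fin n → Fin n → Prop))
    (hne : ∀ P, (F P).Nonempty)
    (hwk : ∀ P r, r ∈ F P → IsWeakOrder r)
    (hnonstrict : ∃ P, ∃ r ∈ F P, ¬ IsLinearOrderRel r)
    (hindiff : ∀ P (r r' : Fin n → Fin n → Prop), IsWeakOrder r → IsWeakOrder r' →
      (∀ i j, (∃ p, P.defined p i j) →
        Int.sign (copeland r i - copeland r j) = Int.sign (copeland r' i - copeland r' j)) →
      (r ∈ F P ↔ r' ∈ F P)) :
    ¬ (∀ P, ∀ r ∈ F P, SCM P (fun i => (copeland r i : ℝ))) := by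
  intro h
  set i0 : Fin n := ⟨0, by omega⟩ with hi0
  set i1 : Fin n := ⟨1, by omega⟩ with hi1
  set i2 : Fin n := ⟨2, by omega⟩ with hi2
  set P : Profile rmin rmax n m := Pex rmin rmax hr.le n m with hP
  -- every outcome of X₀ is a maximal win
  have hMW : ∀ o : Out P i0, IsMaxWin P o := by
    rintro ⟨⟨p, k⟩, hd⟩
    rcases hd with ⟨h1, h2⟩ | ⟨h1, h2⟩
    · have h2' : (k : ℕ) = 1 := h2
      have hk : ¬ ((k : ℕ) = 0) := by omega
      exact ⟨by simp [hP, Pex, IsMaxWin, h1], by simp [hP, Pex, IsMaxWin, hk]⟩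
    · exact absurd h1 (by simp [hi0])
  -- every outcome of X₁ is a maximal loss
  have hML : ∀ o : Out P i1, IsMaxLoss P o := by
    rintro ⟨⟨p, k⟩, hd⟩
    rcases hd with ⟨h1, h2⟩ | ⟨h1, h2⟩
    · exact absurd h1 (by simp [hi1])
    · have h2' : (k : ℕ) = 0 := h2
      have hi : ¬ ((i1 : ℕ) = 0) := by simp [hi1]
      exact ⟨by simp [hP, Pex, IsMaxLoss, hi], by simp [hP, Pex, IsMaxLoss, h2']⟩
  -- X₂ has no outcomes
  have hOut2 : ∀ o : Out P i2, False := by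
    rintro ⟨⟨p, k⟩, hd⟩
    rcases hd with ⟨h1, h2⟩ | ⟨h1, h2⟩ <;> simp [hi2] at h1
  obtain ⟨r, hrF⟩ := hne P
  have hSCMr := h P r hrF
  -- SCM for r between X₀ and X₁ forces cop r 0 > cop r 1
  have e01 : (∅ : Set (Out P i0)) ≃ (∅ : Set (Out P i1)) := Equiv.equivOfIsEmpty _ _
  obtain ⟨_, hst⟩ := hSCMr i0 i1 ∅ ∅ (fun o _ => hMW o) (fun o _ => hML o) e01
    (fun o => absurd o.2 (Set.notMem_empty _))
  have hout0 : Out P i0 := ⟨(⟨0, by omega⟩, i1), Or.inl ⟨rfl, rfl⟩⟩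
  have hgt : (copeland r i0 : ℝ) > (copeland r i1 : ℝ) :=
    hst (Or.inr (Or.inl ⟨hout0, by simp⟩))
  have hgtZ : copeland r i1 < copeland r i0 := by exact_mod_cast hgt
  -- sign agreement between r and rOrd on the defined pairs
  have hc0 := cop_i0 (n := n) hn
  have hc1 := cop_i1 (n := n) hn
  have hc2 := cop_i2 (n := n) hn
  have hsign : ∀ i j : Fin n, (∃ p, P.defined p i j) →
      Int.sign (copeland r i - copeland r j)
        = Int.sign (copeland rOrd i - copeland rOrd j) := by
    rintro i j ⟨p, hd⟩
    rcases hd with ⟨h1, h2⟩ | ⟨h1, h2⟩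
    · have hij : i = i0 := by simp [hi0, Fin.ext_iff, h1]
      have hji : j = i1 := by simp [hi1, Fin.ext_iff, h2]
      subst hij; subst hji
      rw [Int.sign_eq_one_iff_pos.mpr (by omega),
        Int.sign_eq_one_iff_pos.mpr (by rw [hc0, hc1]; omega)]
    · have hij : i = i1 := by simp [hi1, Fin.ext_iff, h1]
      have hji : j = i0 := by simp [hi0, Fin.ext_iff, h2]
      subst hij; subst hji
      rw [Int.sign_eq_neg_one_iff_neg.mpr (by omega),
        Int.sign_eq_neg_one_iff_neg.mpr (by rw [hc0, hc1]; omega)]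
  have hrF' : rOrd ∈ F P :=
    (hindiff P r rOrd (hwk P r hrF) rOrd_weak hsign).mp hrF
  -- SCM for rOrd between X₀ and X₂ forces cop rOrd 0 ≥ cop rOrd 2, contradiction
  have e02 : (∅ : Set (Out P i0)) ≃ (∅ : Set (Out P i2)) := Equiv.equivOfIsEmpty _ _
  obtain ⟨hge, _⟩ := h P rOrd hrF' i0 i2 ∅ ∅ (fun o _ => hMW o)
    (fun o _ => absurd (hOut2 o) not_false) e02 (fun o => absurd o.2 (Set.notMem_empty _))
  have hge' : ((copeland (rOrd (n := n)) i0 : ℤ) : ℝ) ≥ ((copeland rOrd i2 : ℤ) : ℝ) := hge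
  have hgeZ : copeland (rOrd (n := n)) i2 ≤ copeland rOrd i0 := by exact_mod_cast hge'
  rw [hc0, hc2] at hgeZ
  omega
end

section
/- (Theorem 6, computation) For the profile on n ≥ 4 alternatives with maximal wins X_1→X_3, X_3→X_4, X_2→X_4 and no other comparisons, let ρ be any weak order and ρ' the weak order obtained by interchanging X_1 and X_2. Then the objective of WQA(R, C'_5) satisfies f_5(ρ) = (ρ(1) + ρ(2) − 2ρ(4) + 3)·r_max = f_5(ρ'), and the objective of WQA(R, C'_6) satisfies f_6(ρ) = (2ρ(4) − ρ(1) − ρ(2) − 3)·r_min = f_6(ρ'). Hence both operators equalize ρ and ρ'. -/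
open scoped Classical

/-!
Only the six entries `R a c, R c d, R b d` (equal to `r_max`) and `R c a, R d c, R d b`
(equal to `r_min`) contribute. Copeland indices are integers, so a strict inequality between
them is a gap of at least one; hence on each of these pairs the `max` of `C'_5` and the `min`
of `C'_6` are resolved by the order `X₁, X₂ ≻ X₃ ≻ X₄`, which both rankings satisfy. The
resulting values depend on the indices of `X₁` and `X₂` only through their sum, which the
interchange preserves.
-/

section IntGap

variable {m k : ℤ}

theorem max_intCast_sub_add_one_of_lt (h : k < m) :
    max ((m : ℝ) - k + 1) 0 = m - k + 1 := by
  have : (k : ℝ) < m := by exact_mod_cast h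
  exact max_eq_left (by linarith)

theorem max_intCast_sub_add_one_of_gt (h : k < m) :
    max ((k : ℝ) - m + 1) 0 = 0 := by
  have : (k : ℝ) + 1 ≤ m := by exact_mod_cast Int.add_one_le_of_lt h
  exact max_eq_right (by linarith)

theorem min_intCast_sub_sub_one_of_lt (h : k < m) :
    min ((m : ℝ) - k - 1) 0 = 0 := by
  have : (k : ℝ) + 1 ≤ m := by exact_mod_cast Int.add_one_le_of_lt h
  exact min_eq_right (by linarith)

theorem min_intCast_sub_sub_one_of_gt (h : k < m) :
    min ((k : ℝ) - m - 1) 0 = k - m - 1 := by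
  have : (k : ℝ) < m := by exact_mod_cast h
  exact min_eq_left (by linarith)

end IntGap

theorem sum_sum_eq_sum_of_support {ι M : Type*} [Fintype ι] [AddCommMonoid M]
    (F : ι → ι → M) (S : Finset (ι × ι)) (hF : ∀ i j, (i, j) ∉ S → F i j = 0) :
    ∑ i, ∑ j, F i j = ∑ p ∈ S, F p.1 p.2 := by
  rw [← Fintype.sum_prod_type']
  exact (Finset.sum_subset (Finset.subset_univ S) fun p _ hp => hF p.1 p.2 hp).symm

section ThreeArcs

variable {ι : Type*} [Fintype ι] [DecidableEq ι]

def threeArcPairs (a b c d : ι) : Finset (ι × ι) :=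
  {(a, c), (c, d), (b, d), (c, a), (d, c), (d, b)}

variable {R : ι → ι → ℝ} {a b c d : ι}

theorem sum_sum_mul_eq_of_support_threeArcPairs
    (hac : a ≠ c) (had : a ≠ d) (hbc : b ≠ c) (hbd : b ≠ d) (hcd : c ≠ d)
    (hR : ∀ i j, (i, j) ∉ threeArcPairs a b c d → R i j = 0) (g : ι → ι → ℝ) :
    ∑ i, ∑ j, R i j * g i j =
      R a c * g a c + R c d * g c d + R b d * g b d +
        (R c a * g c a + R d c * g d c + R d b * g d b) := by
  rw [sum_sum_eq_sum_of_support _ _ fun i j h => by rw [hR i j h, zero_mul]]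
  simp only [threeArcPairs, Finset.mem_insert, Finset.mem_singleton, Prod.ext_iff, hac, had, hbc,
    hbd, hcd, hac.symm, had.symm, hbc.symm, hbd.symm, hcd.symm, and_self, and_false, false_and,
    and_true, or_self, not_false_eq_true, Finset.sum_insert, Finset.sum_singleton]
  ring

theorem sum_sum_mul_max_eq_of_support_threeArcPairs {p : ℝ} (hbc : b ≠ c)
    (hR : ∀ i j, (i, j) ∉ threeArcPairs a b c d → R i j = 0)
    (hRac : R a c = p) (hRcd : R c d = p) (hRbd : R b d = p)
    (x : ι → ℤ) (hca : x c < x a) (hdc : x d < x c) (hdb : x d < x b) :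
    ∑ i, ∑ j, R i j * max ((x i : ℝ) - x j + 1) 0 = ((x a : ℝ) + x b - 2 * x d + 3) * p := by
  rw [sum_sum_mul_eq_of_support_threeArcPairs (ne_of_apply_ne x hca.ne')
      (ne_of_apply_ne x (hdc.trans hca).ne') hbc (ne_of_apply_ne x hdb.ne')
      (ne_of_apply_ne x hdc.ne') hR,
    max_intCast_sub_add_one_of_lt hca, max_intCast_sub_add_one_of_lt hdc,
    max_intCast_sub_add_one_of_lt hdb, max_intCast_sub_add_one_of_gt hca,
    max_intCast_sub_add_one_of_gt hdc, max_intCast_sub_add_one_of_gt hdb, hRac, hRcd, hRbd]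
  ring

theorem sum_sum_mul_min_eq_of_support_threeArcPairs {q : ℝ} (hbc : b ≠ c)
    (hR : ∀ i j, (i, j) ∉ threeArcPairs a b c d → R i j = 0)
    (hRca : R c a = q) (hRdc : R d c = q) (hRdb : R d b = q)
    (x : ι → ℤ) (hca : x c < x a) (hdc : x d < x c) (hdb : x d < x b) :
    ∑ i, ∑ j, R i j * min ((x i : ℝ) - x j - 1) 0 = (2 * (x d : ℝ) - x a - x b - 3) * q := by
  rw [sum_sum_mul_eq_of_support_threeArcPairs (ne_of_apply_ne x hca.ne')
      (ne_of_apply_ne x (hdc.trans hca).ne') hbc (ne_of_apply_ne x hdb.ne')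
      (ne_of_apply_ne x hdc.ne') hR,
    min_intCast_sub_sub_one_of_lt hca, min_intCast_sub_sub_one_of_lt hdc,
    min_intCast_sub_sub_one_of_lt hdb, min_intCast_sub_sub_one_of_gt hca,
    min_intCast_sub_sub_one_of_gt hdc, min_intCast_sub_sub_one_of_gt hdb, hRca, hRdc, hRdb]
  ring

end ThreeArcs

theorem stmt13_general (n : ℕ) (rmin rmax : ℝ)
    (R : Fin n → Fin n → ℝ)
    (a b c d : Fin n)
    (hR1 : R a c = rmax) (hR2 : R c d = rmax) (hR3 : R b d = rmax)
    (hR4 : R c a = rmin) (hR5 : R d c = rmin) (hR6 : R d b = rmin)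
    (hR0 : ∀ i j, ¬((i = a ∧ j = c) ∨ (i = c ∧ j = d) ∨ (i = b ∧ j = d) ∨
        (i = c ∧ j = a) ∨ (i = d ∧ j = c) ∨ (i = d ∧ j = b)) → R i j = 0)
    (r r' : Fin n → Fin n → Prop)
    (hord : copeland r a > copeland r b ∧ copeland r b > copeland r c ∧
      copeland r c > copeland r d)
    (hs1 : copeland r' a = copeland r b) (hs2 : copeland r' b = copeland r a)
    (hs3 : ∀ i, i ≠ a → i ≠ b → copeland r' i = copeland r i) :
    let f5 : (Fin n → Fin n → Prop) → ℝ := fun s =>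
      ∑ i, ∑ j, R i j * max ((copeland s i : ℝ) - (copeland s j : ℝ) + 1) 0
    let f6 : (Fin n → Fin n → Prop) → ℝ := fun s =>
      ∑ i, ∑ j, R i j * min ((copeland s i : ℝ) - (copeland s j : ℝ) - 1) 0
    f5 r = ((copeland r a : ℝ) + (copeland r b : ℝ) - 2 * (copeland r d : ℝ) + 3) * rmax ∧
    f5 r' = f5 r ∧
    f6 r = (2 * (copeland r d : ℝ) - (copeland r a : ℝ) - (copeland r b : ℝ) - 3) * rmin ∧
    f6 r' = f6 r := by
  intro f5 f6
  obtain ⟨hba, hcb, hdc⟩ := hord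
  have hca := hcb.trans hba
  have hdb := hdc.trans hcb
  have hbc : b ≠ c := ne_of_apply_ne (copeland r) hcb.ne'
  have hR : ∀ i j, (i, j) ∉ threeArcPairs a b c d → R i j = 0 := fun i j h =>
    hR0 i j (by simpa [threeArcPairs] using h)
  have hc' : copeland r' c = copeland r c := hs3 c (ne_of_apply_ne _ hca.ne) hbc.symm
  have hd' : copeland r' d = copeland r d :=
    hs3 d (ne_of_apply_ne _ (hdb.trans hba).ne) (ne_of_apply_ne _ hdb.ne)
  have hca' : copeland r' c < copeland r' a := by rwa [hc', hs1]
  have hdc' : copeland r' d < copeland r' c := by rwa [hd', hc']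
  have hdb' : copeland r' d < copeland r' b := by rw [hd', hs2]; exact hdb.trans hba
  have f5r : f5 r = _ :=
    sum_sum_mul_max_eq_of_support_threeArcPairs hbc hR hR1 hR2 hR3 _ hca hdc hdb
  have f6r : f6 r = _ :=
    sum_sum_mul_min_eq_of_support_threeArcPairs hbc hR hR4 hR5 hR6 _ hca hdc hdb
  have f5r' : f5 r' = _ :=
    sum_sum_mul_max_eq_of_support_threeArcPairs hbc hR hR1 hR2 hR3 _ hca' hdc' hdb'
  have f6r' : f6 r' = _ :=
    sum_sum_mul_min_eq_of_support_threeArcPairs hbc hR hR4 hR5 hR6 _ hca' hdc' hdb'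
  refine ⟨f5r, ?_, f6r, ?_⟩
  · rw [f5r', f5r, hs1, hs2, hd']
    ring
  · rw [f6r', f6r, hs1, hs2, hd']
    ring

/-- Theorem 6 (computation): for the profile with maximal wins `X₁ → X₃`, `X₃ → X₄`,
`X₂ → X₄` and no other comparisons, if `ρ` ranks `X₁ ≻ X₂ ≻ X₃ ≻ X₄` and `ρ'` is
obtained by interchanging `X₁` and `X₂`, then the objectives of `WQA(R, C₅')` and
`WQA(R, C₆')` take the stated values and coincide on `ρ` and `ρ'`; hence both
operators equalize `ρ` and `ρ'`. -/
theorem stmt13 (n : ℕ) (hn : 4 ≤ n) (rmin rmax : ℝ) (hr : rmin < rmax)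
    (R : Fin n → Fin n → ℝ)
    (a b c d : Fin n) (ha : a.val = 0) (hb : b.val = 1) (hc : c.val = 2) (hd : d.val = 3)
    (hR1 : R a c = rmax) (hR2 : R c d = rmax) (hR3 : R b d = rmax)
    (hR4 : R c a = rmin) (hR5 : R d c = rmin) (hR6 : R d b = rmin)
    (hR0 : ∀ i j, ¬((i = a ∧ j = c) ∨ (i = c ∧ j = d) ∨ (i = b ∧ j = d) ∨
        (i = c ∧ j = a) ∨ (i = d ∧ j = c) ∨ (i = d ∧ j = b)) → R i j = 0)
    (r r' : Fin n → Fin n → Prop) (hw : IsWeakOrder r) (hw' : IsWeakOrder r')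
    (hord : copeland r a > copeland r b ∧ copeland r b > copeland r c ∧
      copeland r c > copeland r d)
    (hs1 : copeland r' a = copeland r b) (hs2 : copeland r' b = copeland r a)
    (hs3 : ∀ i, i ≠ a → i ≠ b → copeland r' i = copeland r i) :
    let f5 : (Fin n → Fin n → Prop) → ℝ := fun s =>
      ∑ i, ∑ j, R i j * max ((copeland s i : ℝ) - (copeland s j : ℝ) + 1) 0
    let f6 : (Fin n → Fin n → Prop) → ℝ := fun s =>
      ∑ i, ∑ j, R i j * min ((copeland s i : ℝ) - (copeland s j : ℝ) - 1) 0
    f5 r = ((copeland r a : ℝ) + (copeland r b : ℝ) - 2 * (copeland r d : ℝ) + 3) * rmax ∧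
    f5 r' = f5 r ∧
    f6 r = (2 * (copeland r d : ℝ) - (copeland r a : ℝ) - (copeland r b : ℝ) - 3) * rmin ∧
    f6 r' = f6 r :=
  stmt13_general n rmin rmax R a b c d hR1 hR2 hR3 hR4 hR5 hR6 hR0 r r' hord hs1 hs2 hs3
end

section
/- (Theorem 7, key computation) Let n ≥ 5 and consider the comparison array where for all pairs (i,j) with i < j except (1,2), (1,4), (2,3), there is one comparison with r_{ij} = r_max and r_{ji} = r_min = −r_max. Let ρ be the linear order X_1 ≻ X_2 ≻ X_3 ≻ X_4 ≻ X_5 ≻ ... ≻ X_n and ρ' the weak order X_1 ∼ X_2 ≻ X_3 ≻ X_4 ≻ ... ≻ X_n. Then the β-Least-Squares objective f(σ) = ∑_{(i,j) compared} (r_{ij} − β(σ(i) − σ(j)))² satisfies f(ρ) − f(ρ') = 4β²(n − 5). In particular for n > 5, ρ is not optimal for β-LS. -/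
/-!
The Copeland indices ρ and ρ' differ only at X₁ and X₂ (ρ' = ρ - e₁ + e₂), so only the residuals
of pairs containing X₁ or X₂ change, and a pair contributes the same change in both orders. An item
X_j with j ≥ 5 is compared with both X₁ and X₂; the first-order changes of its two pairs cancel and
4β² remains. X₃ and X₄ are each compared with only one of X₁, X₂, and together they contribute -4β².
-/

open scoped Classical

open Finset

theorem sum_range_sum_range_add_of_eq_zero {M : Type*} [AddCommMonoid M] (F : ℕ → ℕ → M)
    (k m : ℕ) (hF : ∀ i j, k ≤ i → k ≤ j → F i j = 0) :
    ∑ i ∈ range (k + m), ∑ j ∈ range (k + m), F i j =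
      ∑ i ∈ range k, ∑ j ∈ range k, F i j +
        ∑ l ∈ range m, ∑ c ∈ range k, (F c (k + l) + F (k + l) c) := by
  have hfar : ∑ l ∈ range m, ∑ l' ∈ range m, F (k + l) (k + l') = 0 :=
    sum_eq_zero fun _ _ => sum_eq_zero fun _ _ => hF _ _ (by omega) (by omega)
  simp only [sum_range_add, sum_add_distrib, hfar, add_zero]
  rw [sum_comm (s := range k) (t := range m)]
  abel

namespace CopelandLS

/-- Items are indexed from 0, so this excludes the paper's pairs (1,2), (1,4), (2,3). -/
def Compared (i j : ℕ) : Prop :=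
  i ≠ j ∧ ¬((i = 0 ∧ j = 1) ∨ (i = 1 ∧ j = 0) ∨ (i = 0 ∧ j = 3) ∨ (i = 3 ∧ j = 0) ∨
    (i = 1 ∧ j = 2) ∨ (i = 2 ∧ j = 1))

noncomputable def residual (β rmax : ℝ) (σ : ℕ → ℝ) (i j : ℕ) : ℝ :=
  if Compared i j then ((if i < j then rmax else -rmax) - β * (σ i - σ j)) ^ 2 else 0

theorem residual_comm (β rmax : ℝ) (σ : ℕ → ℝ) (i j : ℕ) :
    residual β rmax σ j i = residual β rmax σ i j := by
  have hsymm : Compared j i ↔ Compared i j := by unfold Compared; omega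
  unfold residual
  rw [hsymm]
  by_cases hc : Compared i j
  · obtain h | h := lt_or_gt_of_ne hc.1
    · rw [if_pos hc, if_pos hc, if_neg h.asymm, if_pos h]
      ring
    · rw [if_pos hc, if_pos hc, if_pos h, if_neg h.asymm]
      ring
  · rw [if_neg hc, if_neg hc]

noncomputable def objective (n : ℕ) (β rmax : ℝ) (σ : ℕ → ℝ) : ℝ :=
  ∑ i ∈ range n, ∑ j ∈ range n, residual β rmax σ i j

theorem sum_fin_eq_objective {n : ℕ} (β rmax : ℝ) (cmp : Fin n → Fin n → Prop)
    (hcmp : ∀ i j : Fin n, cmp i j ↔ (i ≠ j ∧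
      ¬((i.val = 0 ∧ j.val = 1) ∨ (i.val = 1 ∧ j.val = 0) ∨
        (i.val = 0 ∧ j.val = 3) ∨ (i.val = 3 ∧ j.val = 0) ∨
        (i.val = 1 ∧ j.val = 2) ∨ (i.val = 2 ∧ j.val = 1))))
    (R : Fin n → Fin n → ℝ)
    (hR : ∀ i j : Fin n, cmp i j → R i j = if i < j then rmax else -rmax)
    (σ : Fin n → ℝ) (s : ℕ → ℝ) (hs : ∀ i : Fin n, σ i = s i) :
    ∑ i, ∑ j, (if cmp i j then (R i j - β * (σ i - σ j)) ^ 2 else 0) = objective n β rmax s := by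
  simp only [objective, ← Fin.sum_univ_eq_sum_range]
  refine sum_congr rfl fun i _ => sum_congr rfl fun j _ => ?_
  have hcmp' : cmp i j ↔ Compared i j := by rw [hcmp, Compared, Fin.val_ne_iff]
  by_cases hij : cmp i j
  · rw [if_pos hij, residual, if_pos (hcmp'.1 hij), hR i j hij, hs, hs]
    simp only [Fin.lt_def]
  · rw [if_neg hij, residual, if_neg (hcmp'.not.1 hij)]

noncomputable def linear (n i : ℕ) : ℝ := n - 1 - 2 * (i : ℝ)

noncomputable def tied (n i : ℕ) : ℝ := if i ≤ 1 then n - 2 else linear n i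

theorem tied_of_le_one {n i : ℕ} (hi : i ≤ 1) : tied n i = n - 2 := if_pos hi

theorem tied_of_two_le {n i : ℕ} (hi : 2 ≤ i) : tied n i = linear n i := if_neg (by omega)

section

variable (n : ℕ) (β rmax : ℝ)

noncomputable def residualDiff (i j : ℕ) : ℝ :=
  residual β rmax (linear n) i j - residual β rmax (tied n) i j

noncomputable def residualDiffTop (j : ℕ) : ℝ :=
  ∑ c ∈ range 2, (residualDiff n β rmax c j + residualDiff n β rmax j c)

theorem residualDiff_eq_zero {i j : ℕ} (hi : 2 ≤ i) (hj : 2 ≤ j) :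
    residualDiff n β rmax i j = 0 := by
  rw [residualDiff, residual, residual, tied_of_two_le hi, tied_of_two_le hj, sub_self]

theorem residualDiffTop_eq (j : ℕ) :
    residualDiffTop n β rmax j =
      2 * (residualDiff n β rmax 0 j + residualDiff n β rmax 1 j) := by
  simp only [residualDiffTop, residualDiff, residual_comm _ _ _ j, sum_range_succ,
    sum_range_zero]
  ring

theorem residualDiff_of_not_compared {i j : ℕ} (h : ¬ Compared i j) :
    residualDiff n β rmax i j = 0 := by
  rw [residualDiff, residual, residual, if_neg h, if_neg h, sub_zero]

theorem residualDiff_zero_left {j : ℕ} (hj : 2 ≤ j) (hj3 : j ≠ 3) :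
    residualDiff n β rmax 0 j = (rmax - 2 * j * β) ^ 2 - (rmax - (2 * j - 1) * β) ^ 2 := by
  have hc : Compared 0 j := by unfold Compared; omega
  rw [residualDiff, residual, residual, if_pos hc, if_pos hc, if_pos (by omega),
    tied_of_le_one (by omega), tied_of_two_le (by omega), linear, linear]
  push_cast
  ring

theorem residualDiff_one_left {j : ℕ} (hj : 3 ≤ j) :
    residualDiff n β rmax 1 j = (rmax - (2 * j - 2) * β) ^ 2 - (rmax - (2 * j - 1) * β) ^ 2 := by
  have hc : Compared 1 j := by unfold Compared; omega
  rw [residualDiff, residual, residual, if_pos hc, if_pos hc, if_pos (by omega),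
    tied_of_le_one (by omega), tied_of_two_le (by omega), linear, linear]
  push_cast
  ring

theorem residualDiffTop_two_add_three :
    residualDiffTop n β rmax 2 + residualDiffTop n β rmax 3 = -4 * β ^ 2 := by
  rw [residualDiffTop_eq, residualDiffTop_eq, residualDiff_zero_left n β rmax le_rfl (by norm_num),
    residualDiff_of_not_compared n β rmax (i := 1) (j := 2) (by simp [Compared]),
    residualDiff_of_not_compared n β rmax (i := 0) (j := 3) (by simp [Compared]),
    residualDiff_one_left n β rmax le_rfl]
  ring

theorem residualDiffTop_of_four_le {j : ℕ} (hj : 4 ≤ j) :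
    residualDiffTop n β rmax j = 4 * β ^ 2 := by
  rw [residualDiffTop_eq, residualDiff_zero_left n β rmax (by omega) (by omega),
    residualDiff_one_left n β rmax (by omega)]
  ring

end

theorem objective_linear_sub_tied {n : ℕ} (hn : 4 ≤ n) (β rmax : ℝ) :
    objective n β rmax (linear n) - objective n β rmax (tied n) =
      4 * β ^ 2 * ((n : ℝ) - 5) := by
  obtain ⟨p, rfl⟩ : ∃ p, n = 2 + (2 + p) := ⟨n - 4, by omega⟩
  have hcorner : ∑ i ∈ range 2, ∑ j ∈ range 2, residualDiff (2 + (2 + p)) β rmax i j = 0 := by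
    simp [sum_range_succ, residualDiff, residual, Compared]
  calc objective _ β rmax (linear _) - objective _ β rmax (tied _)
      = ∑ i ∈ range (2 + (2 + p)), ∑ j ∈ range (2 + (2 + p)),
          residualDiff (2 + (2 + p)) β rmax i j := by
        simp only [objective, residualDiff, sum_sub_distrib]
    _ = ∑ l ∈ range (2 + p), residualDiffTop (2 + (2 + p)) β rmax (2 + l) := by
        rw [sum_range_sum_range_add_of_eq_zero _ 2 _ fun i j => residualDiff_eq_zero _ β rmax,
          hcorner, zero_add]
        rfl
    _ = -4 * β ^ 2 + ∑ l ∈ range p, 4 * β ^ 2 := by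
        rw [sum_range_add, sum_range_succ, sum_range_one, ← residualDiffTop_two_add_three]
        exact congrArg₂ _ rfl
          (sum_congr rfl fun l _ => residualDiffTop_of_four_le _ β rmax (by omega))
    _ = 4 * β ^ 2 * (((2 + (2 + p) : ℕ) : ℝ) - 5) := by
        rw [sum_const, card_range, nsmul_eq_mul]
        push_cast
        ring

end CopelandLS

open CopelandLS in
theorem stmt14_general (n : ℕ) (hn : 5 ≤ n) (β : ℝ) (hβ : 0 < β) (rmax : ℝ)
    (cmp : Fin n → Fin n → Prop)
    (hcmp : ∀ i j : Fin n, cmp i j ↔ (i ≠ j ∧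
      ¬((i.val = 0 ∧ j.val = 1) ∨ (i.val = 1 ∧ j.val = 0) ∨
        (i.val = 0 ∧ j.val = 3) ∨ (i.val = 3 ∧ j.val = 0) ∨
        (i.val = 1 ∧ j.val = 2) ∨ (i.val = 2 ∧ j.val = 1))))
    (R : Fin n → Fin n → ℝ)
    (hR : ∀ i j : Fin n, cmp i j → R i j = if i < j then rmax else -rmax)
    (ρ ρ' : Fin n → ℝ)
    (hρ : ∀ i : Fin n, ρ i = (n : ℝ) - 1 - 2 * (i.val : ℝ))
    (hρ' : ∀ i : Fin n, (i.val = 0 ∨ i.val = 1 → ρ' i = (n : ℝ) - 2) ∧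
      (2 ≤ i.val → ρ' i = (n : ℝ) - 1 - 2 * (i.val : ℝ))) :
    let f : (Fin n → ℝ) → ℝ := fun σ =>
      ∑ i, ∑ j, if cmp i j then (R i j - β * (σ i - σ j)) ^ 2 else 0
    f ρ - f ρ' = 4 * β ^ 2 * ((n : ℝ) - 5) ∧ (5 < n → f ρ' < f ρ) := by
  intro f
  have hρ_tied : ∀ i : Fin n, ρ' i = tied n i := fun i => by
    unfold tied linear
    split_ifs with hi
    · exact (hρ' i).1 (by omega)
    · exact (hρ' i).2 (by omega)
  have hdiff : f ρ - f ρ' = 4 * β ^ 2 * ((n : ℝ) - 5) := by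
    rw [show f ρ = _ from sum_fin_eq_objective β rmax cmp hcmp R hR ρ (linear n) hρ,
      show f ρ' = _ from sum_fin_eq_objective β rmax cmp hcmp R hR ρ' (tied n) hρ_tied]
    exact objective_linear_sub_tied (by omega) β rmax
  refine ⟨hdiff, fun h5 => ?_⟩
  have hn5 : (5 : ℝ) < n := by exact_mod_cast h5
  nlinarith [pow_pos hβ 2]

/-- Theorem 7 (key computation): for the array in which every pair `i < j` except
`(1,2)`, `(1,4)`, `(2,3)` is compared once with `r_{ij} = rmax`, `r_{ji} = -rmax`,
the β-LS objective satisfies `f(ρ) - f(ρ') = 4β²(n-5)`, where `ρ` is the linear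
order `X₁ ≻ X₂ ≻ ⋯ ≻ Xₙ` (Copeland indices `ρ(i) = n + 1 - 2i`) and `ρ'` ties
`X₁ ∼ X₂` above `X₃ ≻ ⋯ ≻ Xₙ`. In particular, for `n > 5` the order `ρ` is not
optimal for β-LS. -/
theorem stmt14 (n : ℕ) (hn : 5 ≤ n) (β : ℝ) (hβ : 0 < β) (rmax : ℝ) (hrmax : 0 < rmax)
    (cmp : Fin n → Fin n → Prop)
    (hcmp : ∀ i j : Fin n, cmp i j ↔ (i ≠ j ∧
      ¬((i.val = 0 ∧ j.val = 1) ∨ (i.val = 1 ∧ j.val = 0) ∨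
        (i.val = 0 ∧ j.val = 3) ∨ (i.val = 3 ∧ j.val = 0) ∨
        (i.val = 1 ∧ j.val = 2) ∨ (i.val = 2 ∧ j.val = 1))))
    (R : Fin n → Fin n → ℝ)
    (hR : ∀ i j : Fin n, cmp i j → R i j = if i < j then rmax else -rmax)
    (ρ ρ' : Fin n → ℝ)
    (hρ : ∀ i : Fin n, ρ i = (n : ℝ) - 1 - 2 * (i.val : ℝ))
    (hρ' : ∀ i : Fin n, (i.val = 0 ∨ i.val = 1 → ρ' i = (n : ℝ) - 2) ∧
      (2 ≤ i.val → ρ' i = (n : ℝ) - 1 - 2 * (i.val : ℝ))) :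
    let f : (Fin n → ℝ) → ℝ := fun σ =>
      ∑ i, ∑ j, if cmp i j then (R i j - β * (σ i - σ j)) ^ 2 else 0
    f ρ - f ρ' = 4 * β ^ 2 * ((n : ℝ) - 5) ∧ (5 < n → f ρ' < f ρ) :=
  stmt14_general n hn β hβ rmax cmp hcmp R hR ρ ρ' hρ hρ'
end

section
/- (Theorem 8) Let ε > 0 be reasonable (i.e., 0 ≤ ε ≤ 1/(m(n−2)) and in particular the contribution f_{ik}^p = r_{ik}^p + ε(x_k − x_i + r_{ik}^p·m·n) is ≥ 0 for every maximal win and ≤ 0 for every maximal loss), and let x = (x_1,...,x_n) be the unique solution of the generalized row sum system x_i = ∑_{(k,p)|i} (r_{ik}^p + ε(x_k − x_i + r_{ik}^p·m·n)). Then the ranking by x satisfies Self-Consistent Monotonicity: under the SCM hypotheses comparing X_i and X_j (a not-weaker bijection between R_i' and R_j' w.r.t. the ranking by x, with extra outcomes R_i'' all maximal wins and R_j'' all maximal losses), one has x_i ≥ x_j, with strict inequality if some paired outcome is strictly stronger or R_i'' ∪ R_j'' ≠ ∅. -/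
open scoped Classical

variable {rmin rmax : ℝ} {n m : ℕ}

noncomputable def SI {n m : ℕ} (c : Fin m → Fin n → Prop) (f : Fin m → Fin n → ℝ) : ℝ :=
  ∑ p, ∑ l, if c p l then f p l else 0

namespace SI
variable {n m : ℕ} {c c' : Fin m → Fin n → Prop} {f g : Fin m → Fin n → ℝ}

lemma def' [∀ p l, Decidable (c p l)] :
    SI c f = ∑ p, ∑ l, if c p l then f p l else 0 := by
  unfold SI
  refine Finset.sum_congr rfl fun p _ => Finset.sum_congr rfl fun l _ => ?_
  by_cases h : c p l <;> simp [h]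

lemma nonneg (h0 : ∀ p l, c p l → 0 ≤ f p l) : 0 ≤ SI c f := by
  refine Finset.sum_nonneg fun p _ => Finset.sum_nonneg fun l _ => ?_
  by_cases h : c p l <;> simp [h, h0 p l]

lemma eq_zero (h0 : ∀ p l, c p l → 0 ≤ f p l) (hz : SI c f = 0) :
    ∀ p l, c p l → f p l = 0 := by
  intro p l hc
  have h1 : ∀ p ∈ (Finset.univ : Finset (Fin m)),
      0 ≤ ∑ l, if c p l then f p l else 0 := fun p _ =>
    Finset.sum_nonneg fun l _ => by by_cases h : c p l <;> simp [h, h0 p l]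
  have h2 := (Finset.sum_eq_zero_iff_of_nonneg h1).1 hz p (Finset.mem_univ p)
  have h3 : ∀ l ∈ (Finset.univ : Finset (Fin n)),
      0 ≤ if c p l then f p l else 0 := fun l _ => by
    by_cases h : c p l <;> simp [h, h0 p l]
  have h4 := (Finset.sum_eq_zero_iff_of_nonneg h3).1 h2 l (Finset.mem_univ l)
  simpa [hc] using h4

lemma sub_eq : SI c (fun p l => f p l - g p l) = SI c f - SI c g := by
  unfold SI
  rw [← Finset.sum_sub_distrib]
  refine Finset.sum_congr rfl fun p _ => ?_
  rw [← Finset.sum_sub_distrib]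
  refine Finset.sum_congr rfl fun l _ => ?_
  by_cases h : c p l <;> simp [h]

lemma const_eq (k : ℝ) : SI c (fun _ _ => k) = k * SI c (fun _ _ => (1:ℝ)) := by
  unfold SI
  rw [Finset.mul_sum]
  refine Finset.sum_congr rfl fun p _ => ?_
  rw [Finset.mul_sum]
  refine Finset.sum_congr rfl fun l _ => ?_
  by_cases h : c p l <;> simp [h]

lemma congr_iff (h : ∀ p l, c p l ↔ c' p l) : SI c f = SI c' f := by
  unfold SI
  refine Finset.sum_congr rfl fun p _ => Finset.sum_congr rfl fun l _ => ?_
  by_cases hc : c p l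
  · rw [if_pos hc, if_pos ((h p l).1 hc)]
  · rw [if_neg hc, if_neg (fun hc' => hc ((h p l).2 hc'))]

lemma of_false (h : ∀ p l, ¬ c p l) : SI c f = 0 := by
  unfold SI
  exact Finset.sum_eq_zero fun p _ => Finset.sum_eq_zero fun l _ => by simp [h p l]

lemma ne_diag (a : Fin n) (x : Fin n → ℝ) :
    SI (m := m) (fun _ l => l ≠ a) (fun _ l => x l) = (m : ℝ) * ((∑ l, x l) - x a) := by
  rw [SI.def']
  have h1 : ∀ l : Fin n, (if l ≠ a then x l else 0) = x l - (if l = a then x l else 0) := by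
    intro l; by_cases h : l = a <;> simp [h]
  have h2 : ∑ l, (if l ≠ a then x l else 0) = (∑ l, x l) - x a := by
    rw [Finset.sum_congr rfl fun l _ => h1 l, Finset.sum_sub_distrib,
      Finset.sum_ite_eq' Finset.univ a x, if_pos (Finset.mem_univ a)]
  rw [Finset.sum_congr rfl fun (p : Fin m) _ => h2]
  simp [Finset.sum_const, mul_comm]
  ring

end SI

lemma grs_sum_zero (P : Profile (-rmax) rmax n m)
    (hskew : ∀ p i j, P.defined p i j → P.val p j i = -P.val p i j)
    (ε : ℝ) (x : Fin n → ℝ)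
    (hx : ∀ i, x i = ∑ k, ∑ p, if P.defined p i k then
      P.val p i k + ε * (x k - x i + P.val p i k * (m : ℝ) * (n : ℝ)) else 0) :
    (∑ l, x l) = 0 := by
  have hneg : ∀ i k : Fin n,
      (∑ p, if P.defined p k i then
        P.val p k i + ε * (x i - x k + P.val p k i * (m : ℝ) * (n : ℝ)) else 0)
      = - ∑ p, if P.defined p i k then
        P.val p i k + ε * (x k - x i + P.val p i k * (m : ℝ) * (n : ℝ)) else 0 := by
    intro i k
    rw [← Finset.sum_neg_distrib]
    refine Finset.sum_congr rfl fun p _ => ?_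
    by_cases hd : P.defined p i k
    · have hd' := P.defined_symm p i k hd
      rw [if_pos hd, if_pos hd', hskew p i k hd]; ring
    · have hd' : ¬ P.defined p k i := fun h => hd (P.defined_symm p k i h)
      rw [if_neg hd, if_neg hd']; ring
  have h1 : (∑ l, x l) = ∑ i, ∑ k, ∑ p, (if P.defined p i k then
      P.val p i k + ε * (x k - x i + P.val p i k * (m : ℝ) * (n : ℝ)) else 0) :=
    Finset.sum_congr rfl fun i _ => hx i
  have h2 : (∑ i, ∑ k, ∑ p, (if P.defined p i k then
      P.val p i k + ε * (x k - x i + P.val p i k * (m : ℝ) * (n : ℝ)) else 0))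
      = ∑ k, ∑ i, ∑ p, (if P.defined p i k then
      P.val p i k + ε * (x k - x i + P.val p i k * (m : ℝ) * (n : ℝ)) else 0) :=
    Finset.sum_comm
  have h3 : (∑ k : Fin n, ∑ i : Fin n, ∑ p, (if P.defined p i k then
      P.val p i k + ε * (x k - x i + P.val p i k * (m : ℝ) * (n : ℝ)) else 0))
      = - ∑ i, ∑ k, ∑ p, (if P.defined p i k then
      P.val p i k + ε * (x k - x i + P.val p i k * (m : ℝ) * (n : ℝ)) else 0) := by
    rw [← Finset.sum_neg_distrib]
    refine Finset.sum_congr rfl fun i _ => ?_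
    rw [← Finset.sum_neg_distrib]
    exact Finset.sum_congr rfl fun k _ => hneg i k
  rw [h1]
  have := h2.trans h3
  linarith [this]

lemma grs_count (P : Profile (-rmax) rmax n m) (a : Fin n) :
    SI (fun p l => l ≠ a ∧ ¬ P.defined p a l) (fun _ _ => (1:ℝ))
      + SI (fun p l => P.defined p a l) (fun _ _ => (1:ℝ)) = (m : ℝ) * ((n : ℝ) - 1) := by
  have h2 : SI (m := m) (fun _ l => l ≠ a) (fun _ l => (1:ℝ)) = (m : ℝ) * ((n : ℝ) - 1) := by
    rw [SI.ne_diag a (fun _ => (1:ℝ))]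
    simp
  rw [← h2, SI.def', SI.def', SI.def', ← Finset.sum_add_distrib]
  refine Finset.sum_congr rfl fun p _ => ?_
  rw [← Finset.sum_add_distrib]
  refine Finset.sum_congr rfl fun l _ => ?_
  by_cases hd : P.defined p a l
  · have hne : l ≠ a := fun h => P.defined_irrefl p a (h ▸ hd)
    simp [hd, hne]
  · by_cases hne : l = a <;> simp [hd, hne, P.defined_irrefl p a]

lemma grs_Ea (P : Profile (-rmax) rmax n m) (ε : ℝ) (x : Fin n → ℝ)
    (hx : ∀ i, x i = ∑ k, ∑ p, if P.defined p i k then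
      P.val p i k + ε * (x k - x i + P.val p i k * (m : ℝ) * (n : ℝ)) else 0)
    (hsum : (∑ l, x l) = 0) (a : Fin n) :
    x a * (1 + ε * m + ε * SI (fun p l => P.defined p a l) (fun _ _ => (1:ℝ)))
      = (1 + ε * m * n) * SI (fun p l => P.defined p a l) (fun p l => P.val p a l)
        - ε * SI (fun p l => l ≠ a ∧ ¬ P.defined p a l) (fun _ l => x l) := by
  have h0 : x a = ∑ p, ∑ l, (if P.defined p a l then
      P.val p a l + ε * (x l - x a + P.val p a l * (m : ℝ) * (n : ℝ)) else 0) :=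
    (hx a).trans Finset.sum_comm
  have hkey : ∀ (p : Fin m) (l : Fin n),
      (if P.defined p a l then
        P.val p a l + ε * (x l - x a + P.val p a l * (m : ℝ) * (n : ℝ)) else 0)
      = (1 + ε * m * n) * (if P.defined p a l then P.val p a l else 0)
        + ε * (if l ≠ a then x l else 0)
        - ε * (if l ≠ a ∧ ¬ P.defined p a l then x l else 0)
        - ε * x a * (if P.defined p a l then (1:ℝ) else 0) := by
    intro p l
    by_cases hd : P.defined p a l
    · have hne : l ≠ a := fun h => P.defined_irrefl p a (h ▸ hd)
      rw [if_pos hd, if_pos hd, if_pos hd, if_pos hne,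
        if_neg (fun h : l ≠ a ∧ ¬ P.defined p a l => h.2 hd)]
      ring
    · by_cases hne : l ≠ a
      · rw [if_neg hd, if_neg hd, if_neg hd, if_pos hne, if_pos ⟨hne, hd⟩]; ring
      · rw [if_neg hd, if_neg hd, if_neg hd, if_neg hne,
          if_neg (fun h : l ≠ a ∧ ¬ P.defined p a l => hne h.1)]; ring
  have h0' : x a = ∑ p, ∑ l,
      ((1 + ε * m * n) * (if P.defined p a l then P.val p a l else 0)
        + ε * (if l ≠ a then x l else 0)
        - ε * (if l ≠ a ∧ ¬ P.defined p a l then x l else 0)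
        - ε * x a * (if P.defined p a l then (1:ℝ) else 0)) :=
    h0.trans (Finset.sum_congr rfl fun p _ => Finset.sum_congr rfl fun l _ => hkey p l)
  simp only [Finset.sum_sub_distrib, Finset.sum_add_distrib, ← Finset.mul_sum] at h0'
  have hdiag : (∑ p : Fin m, ∑ l, (if l ≠ a then x l else 0)) = (m:ℝ) * (0 - x a) := by
    have := SI.ne_diag (m := m) a x
    rw [SI.def', hsum] at this
    exact this
  rw [hdiag] at h0'
  rw [SI.def', SI.def', SI.def']
  linear_combination h0'

lemma grs_main (hrmax : 0 < rmax)
    (P : Profile (-rmax) rmax n m) (ε : ℝ) (hε : 0 < ε)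
    (hreas2 : ε * ((m : ℝ) * ((n : ℝ) - 2)) ≤ 1)
    (x : Fin n → ℝ)
    (hx : ∀ i, x i = ∑ k, ∑ p, if P.defined p i k then
      P.val p i k + ε * (x k - x i + P.val p i k * (m : ℝ) * (n : ℝ)) else 0)
    (hsum : (∑ l, x l) = 0)
    (a b : Fin n) (ha : ∀ l, x l ≤ x a) (hb : ∀ l, x b ≤ x l) :
    ε * (x a - x b) ≤ (1 + ε * m * n) * rmax ∧
    (ε * (x a - x b) = (1 + ε * m * n) * rmax →
      (∀ p l, P.defined p a l → P.val p a l = rmax) ∧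
      (∀ p l, l ≠ a → ¬ P.defined p a l → x l = x b) ∧
      (∀ p l, P.defined p b l → P.val p b l = -rmax) ∧
      (∀ p l, l ≠ b → ¬ P.defined p b l → x l = x a)) := by
  have hc : (0:ℝ) < 1 + ε * m * n := by positivity
  have hs0 : 0 ≤ x a - x b := by have h1 := hb a; linarith
  have hEa := grs_Ea P ε x hx hsum a
  have hEb := grs_Ea P ε x hx hsum b
  have hCnta := grs_count P a
  have hCntb := grs_count P b
  set Da := SI (fun p l => P.defined p a l) (fun _ _ => (1:ℝ)) with hDa
  set Ra := SI (fun p l => P.defined p a l) (fun p l => P.val p a l) with hRa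
  set Na := SI (fun p l => l ≠ a ∧ ¬ P.defined p a l) (fun _ l => x l) with hNa
  set Ca := SI (fun p l => l ≠ a ∧ ¬ P.defined p a l) (fun _ _ => (1:ℝ)) with hCa
  set Db := SI (fun p l => P.defined p b l) (fun _ _ => (1:ℝ)) with hDb
  set Rb := SI (fun p l => P.defined p b l) (fun p l => P.val p b l) with hRb
  set Nb := SI (fun p l => l ≠ b ∧ ¬ P.defined p b l) (fun _ l => x l) with hNb
  set Cb := SI (fun p l => l ≠ b ∧ ¬ P.defined p b l) (fun _ _ => (1:ℝ)) with hCb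
  have hDa0 : 0 ≤ Da := by rw [hDa]; exact SI.nonneg fun _ _ _ => zero_le_one
  have hDb0 : 0 ≤ Db := by rw [hDb]; exact SI.nonneg fun _ _ _ => zero_le_one
  have hCa' : Ca = (m:ℝ) * ((n:ℝ) - 1) - Da := by linarith
  have hCb' : Cb = (m:ℝ) * ((n:ℝ) - 1) - Db := by linarith
  -- the four slack identities
  have hs1 : SI (fun p l => P.defined p a l) (fun p l => rmax - P.val p a l)
      = rmax * Da - Ra := by
    rw [SI.sub_eq, SI.const_eq, hDa, hRa]
  have hs2 : SI (fun p l => l ≠ a ∧ ¬ P.defined p a l) (fun _ l => x l - x b)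
      = Na - x b * Ca := by
    rw [SI.sub_eq, SI.const_eq, hNa, hCa]
  have hs3 : SI (fun p l => P.defined p b l) (fun p l => P.val p b l - (-rmax))
      = Rb - (-rmax) * Db := by
    rw [SI.sub_eq, SI.const_eq, hRb, hDb]
  have hs4 : SI (fun p l => l ≠ b ∧ ¬ P.defined p b l) (fun _ l => x a - x l)
      = x a * Cb - Nb := by
    rw [SI.sub_eq, SI.const_eq, hNb, hCb]
  have hn1 : 0 ≤ rmax * Da - Ra := by
    rw [← hs1]; exact SI.nonneg fun p l hd => sub_nonneg.2 (P.val_mem p a l hd).2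
  have hn2 : 0 ≤ Na - x b * Ca := by
    rw [← hs2]; exact SI.nonneg fun p l _ => sub_nonneg.2 (hb l)
  have hn3 : 0 ≤ Rb - (-rmax) * Db := by
    rw [← hs3]; exact SI.nonneg fun p l hd => sub_nonneg.2 (P.val_mem p b l hd).1
  have hn4 : 0 ≤ x a * Cb - Nb := by
    rw [← hs4]; exact SI.nonneg fun p l _ => sub_nonneg.2 (ha l)
  -- star identity
  have star : (1 + ε * m * n) * (rmax * Da - Ra) + ε * (Na - x b * Ca)
      + (1 + ε * m * n) * (Rb - (-rmax) * Db) + ε * (x a * Cb - Nb)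
      = (Da + Db) * ((1 + ε * m * n) * rmax - ε * (x a - x b))
        + (x a - x b) * (ε * ((m:ℝ) * ((n:ℝ) - 2)) - 1) := by
    rw [hCa', hCb']
    linear_combination hEa - hEb
  have q1 : 0 ≤ (1 + ε * m * n) * (rmax * Da - Ra) := mul_nonneg hc.le hn1
  have q2 : 0 ≤ ε * (Na - x b * Ca) := mul_nonneg hε.le hn2
  have q3 : 0 ≤ (1 + ε * m * n) * (Rb - (-rmax) * Db) := mul_nonneg hc.le hn3
  have q4 : 0 ≤ ε * (x a * Cb - Nb) := mul_nonneg hε.le hn4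
  have hup : 0 ≤ (Da + Db) * ((1 + ε * m * n) * rmax - ε * (x a - x b))
      + (x a - x b) * (ε * ((m:ℝ) * ((n:ℝ) - 2)) - 1) := by
    rw [← star]; linarith
  constructor
  · by_contra hlt
    push_neg at hlt
    have hT : Da = 0 ∧ Db = 0 := by
      by_contra hT'
      have hTpos : 0 < Da + Db := by
        rcases (by linarith : (0:ℝ) ≤ Da + Db).lt_or_eq with h | h
        · exact h
        · exact absurd ⟨by linarith, by linarith⟩ hT'
      linarith [hup, mul_pos hTpos (sub_pos.2 hlt), mul_nonneg hs0
        (sub_nonneg.2 hreas2)]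
    obtain ⟨hDaz, hDbz⟩ := hT
    have hnda : ∀ p l, ¬ P.defined p a l := by
      intro p l hd
      have h := SI.eq_zero (c := fun p l => P.defined p a l) (f := fun _ _ => (1:ℝ))
        (fun _ _ _ => zero_le_one) (hDa ▸ hDaz) p l hd
      norm_num at h
    have hndb : ∀ p l, ¬ P.defined p b l := by
      intro p l hd
      have h := SI.eq_zero (c := fun p l => P.defined p b l) (f := fun _ _ => (1:ℝ))
        (fun _ _ _ => zero_le_one) (hDb ▸ hDbz) p l hd
      norm_num at h
    have hRaz : Ra = 0 := by rw [hRa]; exact SI.of_false hnda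
    have hRbz : Rb = 0 := by rw [hRb]; exact SI.of_false hndb
    have hNaz : Na = (m:ℝ) * (0 - x a) := by
      rw [hNa, SI.congr_iff (c' := fun _ l => l ≠ a)
        (fun p l => ⟨fun h => h.1, fun h => ⟨h, hnda p l⟩⟩), SI.ne_diag, hsum]
    have hNbz : Nb = (m:ℝ) * (0 - x b) := by
      rw [hNb, SI.congr_iff (c' := fun _ l => l ≠ b)
        (fun p l => ⟨fun h => h.1, fun h => ⟨h, hndb p l⟩⟩), SI.ne_diag, hsum]
    rw [hRaz, hNaz, hDaz] at hEa
    rw [hRbz, hNbz, hDbz] at hEb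
    have hxa0 : x a = 0 := by linear_combination hEa
    have hxb0 : x b = 0 := by linear_combination hEb
    rw [hxa0, hxb0] at hlt
    linarith [mul_pos hc hrmax]
  · intro heq
    have hstarle : (1 + ε * m * n) * (rmax * Da - Ra) + ε * (Na - x b * Ca)
        + (1 + ε * m * n) * (Rb - (-rmax) * Db) + ε * (x a * Cb - Nb) ≤ 0 := by
      rw [star, heq]
      linarith [mul_nonneg hs0 (sub_nonneg.2 hreas2)]
    have z1 : rmax * Da - Ra = 0 := by
      have e1 : (1 + ε * m * n) * (rmax * Da - Ra) = 0 := by linarith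
      rcases mul_eq_zero.1 e1 with h | h
      · linarith
      · exact h
    have z2 : Na - x b * Ca = 0 := by
      have e2 : ε * (Na - x b * Ca) = 0 := by linarith
      rcases mul_eq_zero.1 e2 with h | h
      · linarith
      · exact h
    have z3 : Rb - (-rmax) * Db = 0 := by
      have e3 : (1 + ε * m * n) * (Rb - (-rmax) * Db) = 0 := by linarith
      rcases mul_eq_zero.1 e3 with h | h
      · linarith
      · exact h
    have z4 : x a * Cb - Nb = 0 := by
      have e4 : ε * (x a * Cb - Nb) = 0 := by linarith
      rcases mul_eq_zero.1 e4 with h | h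
      · linarith
      · exact h
    refine ⟨?_, ?_, ?_, ?_⟩
    · intro p l hd
      have h := SI.eq_zero (c := fun p l => P.defined p a l)
        (f := fun p l => rmax - P.val p a l)
        (fun p l hd => sub_nonneg.2 (P.val_mem p a l hd).2)
        (by rw [hs1]; exact z1) p l hd
      have h' : rmax - P.val p a l = 0 := h
      linarith
    · intro p l hne hnd
      have h := SI.eq_zero (c := fun p l => l ≠ a ∧ ¬ P.defined p a l)
        (f := fun _ l => x l - x b)
        (fun p l _ => sub_nonneg.2 (hb l))
        (by rw [hs2]; exact z2) p l ⟨hne, hnd⟩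
      have h' : x l - x b = 0 := h
      linarith
    · intro p l hd
      have h := SI.eq_zero (c := fun p l => P.defined p b l)
        (f := fun p l => P.val p b l - (-rmax))
        (fun p l hd => sub_nonneg.2 (P.val_mem p b l hd).1)
        (by rw [hs3]; exact z3) p l hd
      have h' : P.val p b l - (-rmax) = 0 := h
      linarith
    · intro p l hne hnd
      have h := SI.eq_zero (c := fun p l => l ≠ b ∧ ¬ P.defined p b l)
        (f := fun _ l => x a - x l)
        (fun p l _ => sub_nonneg.2 (ha l))
        (by rw [hs4]; exact z4) p l ⟨hne, hnd⟩
      have h' : x a - x l = 0 := h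
      linarith

lemma grs_gap (hn : 2 < n) (hrmax : 0 < rmax)
    (P : Profile (-rmax) rmax n m) (ε : ℝ) (hε : 0 < ε)
    (hreas2 : ε * ((m : ℝ) * ((n : ℝ) - 2)) ≤ 1)
    (x : Fin n → ℝ)
    (hx : ∀ i, x i = ∑ k, ∑ p, if P.defined p i k then
      P.val p i k + ε * (x k - x i + P.val p i k * (m : ℝ) * (n : ℝ)) else 0)
    (hsum : (∑ l, x l) = 0)
    (i0 k0 : Fin n) (hgap : ε * (x i0 - x k0) = (1 + ε * m * n) * rmax) :
    (∀ l, x l ≤ x i0) ∧ (∀ l, x k0 ≤ x l) ∧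
    (∀ p l, P.defined p i0 l → P.val p i0 l = rmax) ∧
    (∀ p l, l ≠ i0 → ¬ P.defined p i0 l → x l = x k0) ∧
    (∀ p l, P.defined p k0 l → P.val p k0 l = -rmax) ∧
    (∀ p l, l ≠ k0 → ¬ P.defined p k0 l → x l = x i0) := by
  have hnem : Nonempty (Fin n) := ⟨⟨0, by omega⟩⟩
  obtain ⟨a, -, ha⟩ := Finset.exists_max_image Finset.univ x Finset.univ_nonempty
  obtain ⟨b, -, hb⟩ := Finset.exists_min_image Finset.univ x Finset.univ_nonempty
  have ha' : ∀ l, x l ≤ x a := fun l => ha l (Finset.mem_univ l)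
  have hb' : ∀ l, x b ≤ x l := fun l => hb l (Finset.mem_univ l)
  have h1 := (grs_main hrmax P ε hε hreas2 x hx hsum a b ha' hb').1
  have h2 : x a - x b ≤ x i0 - x k0 := by
    rw [← hgap] at h1
    exact le_of_mul_le_mul_left h1 hε
  have e1 : x i0 = x a := le_antisymm (ha' i0) (by have := ha' i0; have := hb' k0; linarith)
  have e2 : x k0 = x b := le_antisymm (by have := ha' i0; have := hb' k0; linarith) (hb' k0)
  have hmax : ∀ l, x l ≤ x i0 := fun l => e1 ▸ ha' l
  have hmin : ∀ l, x k0 ≤ x l := fun l => e2 ▸ hb' l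
  have hm2 := (grs_main hrmax P ε hε hreas2 x hx hsum i0 k0 hmax hmin).2 hgap
  exact ⟨hmax, hmin, hm2.1, hm2.2.1, hm2.2.2.1, hm2.2.2.2⟩

noncomputable instance (P : Profile rmin rmax n m) (i : Fin n) : Fintype (Out P i) :=
  Subtype.fintype _

def contrib (P : Profile (-rmax) rmax n m) (ε : ℝ) (x : Fin n → ℝ) (i : Fin n)
    (o : Out P i) : ℝ :=
  P.val o.1.1 i o.1.2 + ε * (x o.1.2 - x i + P.val o.1.1 i o.1.2 * (m : ℝ) * (n : ℝ))

lemma sum_split {α : Type*} [Fintype α] (A : Set α) (f : α → ℝ) :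
    ∑ o : α, f o = (∑ oa : A, f ↑oa) + ∑ o : α, (if o ∉ A then f o else 0) := by
  have h1 : ∑ o : α, f o = ∑ o : α, ((if o ∈ A then f o else 0) + (if o ∉ A then f o else 0)) := by
    refine Finset.sum_congr rfl fun o _ => ?_
    by_cases h : o ∈ A <;> simp [h]
  rw [h1, Finset.sum_add_distrib]
  congr 1
  rw [← Finset.sum_filter]
  exact Finset.sum_subtype _ (fun q => by simp) _

set_option maxHeartbeats 1000000 in
lemma contrib_sum (P : Profile (-rmax) rmax n m) (ε : ℝ) (x : Fin n → ℝ)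
    (hx : ∀ i, x i = ∑ k, ∑ p, if P.defined p i k then
      P.val p i k + ε * (x k - x i + P.val p i k * (m : ℝ) * (n : ℝ)) else 0)
    (i : Fin n) : x i = ∑ o : Out P i, contrib P ε x i o := by
  calc x i = ∑ p, ∑ k, (if P.defined p i k then
        P.val p i k + ε * (x k - x i + P.val p i k * (m : ℝ) * (n : ℝ)) else 0) :=
      (hx i).trans Finset.sum_comm
    _ = ∑ q : Fin m × Fin n, (if P.defined q.1 i q.2 then
        P.val q.1 i q.2 + ε * (x q.2 - x i + P.val q.1 i q.2 * (m : ℝ) * (n : ℝ)) else 0) :=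
      (Fintype.sum_prod_type (fun q : Fin m × Fin n => if P.defined q.1 i q.2 then
        P.val q.1 i q.2 + ε * (x q.2 - x i + P.val q.1 i q.2 * (m : ℝ) * (n : ℝ))
        else 0)).symm
    _ = ∑ q ∈ Finset.univ.filter (fun q : Fin m × Fin n => P.defined q.1 i q.2),
        (P.val q.1 i q.2 + ε * (x q.2 - x i + P.val q.1 i q.2 * (m : ℝ) * (n : ℝ))) :=
      (Finset.sum_filter _ _).symm
    _ = ∑ o : Out P i, (P.val o.1.1 i o.1.2
        + ε * (x o.1.2 - x i + P.val o.1.1 i o.1.2 * (m : ℝ) * (n : ℝ))) :=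
      Finset.sum_subtype _ (fun q => by simp) _
    _ = ∑ o : Out P i, contrib P ε x i o := rfl

set_option maxHeartbeats 3000000 in
/-- Theorem 8: the generalized row sum method with positive reasonable `ε`
satisfies Self-Consistent Monotonicity. Here `x` is the (unique) solution of the
generalized row sum system for a skew-symmetric array, reasonableness gives the
sign property of the contributions, and the SCM conclusion is stated for the
ranking by `x`: under a not-weaker bijection between `R_i'` and `R_j'` with the
extra outcomes `R_i''` all maximal wins and `R_j''` all maximal losses, we get
`x i ≥ x j`, strictly if some paired outcome is strictly stronger or
`R_i'' ∪ R_j'' ≠ ∅`. -/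
theorem stmt16 (n m : ℕ) (hn : 2 < n) (hm : 1 ≤ m) (rmax : ℝ) (hrmax : 0 < rmax)
    (P : Profile (-rmax) rmax n m)
    (hskew : ∀ p i j, P.defined p i j → P.val p j i = -P.val p i j)
    (ε : ℝ) (hε : 0 < ε) (hreas : ε ≤ 1 / ((m : ℝ) * ((n : ℝ) - 2)))
    (x : Fin n → ℝ)
    (hx : ∀ i, x i = ∑ k, ∑ p, if P.defined p i k then
      P.val p i k + ε * (x k - x i + P.val p i k * (m : ℝ) * (n : ℝ)) else 0)
    (hsign : ∀ p i k, P.defined p i k →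
      (P.val p i k = rmax →
        0 ≤ P.val p i k + ε * (x k - x i + P.val p i k * (m : ℝ) * (n : ℝ))) ∧
      (P.val p i k = -rmax →
        P.val p i k + ε * (x k - x i + P.val p i k * (m : ℝ) * (n : ℝ)) ≤ 0)) :
    ∀ i j : Fin n, ∀ (A : Set (Out P i)) (B : Set (Out P j)),
      (∀ o : Out P i, o ∉ A → P.val o.1.1 i o.1.2 = rmax) →
      (∀ o : Out P j, o ∉ B → P.val o.1.1 j o.1.2 = -rmax) →
      ∀ e : A ≃ B,
        (∀ o : A, P.val o.1.1.1 i o.1.1.2 ≥ P.val (e o).1.1.1 j (e o).1.1.2 ∧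
          x o.1.1.2 ≥ x (e o).1.1.2) →
        x i ≥ x j ∧
        (((∃ o : A, P.val o.1.1.1 i o.1.1.2 > P.val (e o).1.1.1 j (e o).1.1.2 ∨
              x o.1.1.2 > x (e o).1.1.2) ∨
            (∃ o : Out P i, o ∉ A) ∨ (∃ o : Out P j, o ∉ B)) → x i > x j) := by
  intro i j A B hA hB e he
  have hsum := grs_sum_zero P hskew ε x hx
  have hm2 : (0:ℝ) < (m : ℝ) * ((n : ℝ) - 2) := by
    have h1 : (1:ℝ) ≤ (m : ℝ) := by exact_mod_cast hm
    have h2 : (2:ℝ) < (n : ℝ) := by exact_mod_cast hn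
    nlinarith
  have hreas2 : ε * ((m : ℝ) * ((n : ℝ) - 2)) ≤ 1 := by
    rw [le_div_iff₀ hm2] at hreas; exact hreas
  have hc : (0:ℝ) < 1 + ε * (m : ℝ) * (n : ℝ) := by positivity
  have hxi := contrib_sum P ε x hx i
  have hxj := contrib_sum P ε x hx j
  rw [sum_split A (contrib P ε x i)] at hxi
  rw [sum_split B (contrib P ε x j)] at hxj
  have hBe : (∑ ob : B, contrib P ε x j ↑ob) = ∑ oa : A, contrib P ε x j ↑(e oa) :=
    (Equiv.sum_comp e (fun ob : B => contrib P ε x j ↑ob)).symm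
  rw [hBe] at hxj
  have hTS : (∑ oa : A, contrib P ε x i ↑oa) - (∑ oa : A, contrib P ε x j ↑(e oa))
      = (∑ oa : A, ((1 + ε * (m : ℝ) * (n : ℝ)) *
            (P.val (↑oa : Out P i).1.1 i (↑oa : Out P i).1.2
              - P.val (↑(e oa) : Out P j).1.1 j (↑(e oa) : Out P j).1.2)
          + ε * (x (↑oa : Out P i).1.2 - x (↑(e oa) : Out P j).1.2)))
        + (Fintype.card A : ℝ) * (ε * (x j - x i)) := by
    rw [← Finset.sum_sub_distrib]
    have hKey : ∀ oa : A, contrib P ε x i ↑oa - contrib P ε x j ↑(e oa)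
        = ((1 + ε * (m : ℝ) * (n : ℝ)) *
            (P.val (↑oa : Out P i).1.1 i (↑oa : Out P i).1.2
              - P.val (↑(e oa) : Out P j).1.1 j (↑(e oa) : Out P j).1.2)
          + ε * (x (↑oa : Out P i).1.2 - x (↑(e oa) : Out P j).1.2))
          + ε * (x j - x i) := by
      intro oa; simp only [contrib]; ring
    rw [Finset.sum_congr rfl fun oa _ => hKey oa, Finset.sum_add_distrib,
      Finset.sum_const, Finset.card_univ, nsmul_eq_mul]
  set Tsum := ∑ oa : A, ((1 + ε * (m : ℝ) * (n : ℝ)) *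
            (P.val (↑oa : Out P i).1.1 i (↑oa : Out P i).1.2
              - P.val (↑(e oa) : Out P j).1.1 j (↑(e oa) : Out P j).1.2)
          + ε * (x (↑oa : Out P i).1.2 - x (↑(e oa) : Out P j).1.2)) with hTsum
  set Wi := ∑ o : Out P i, (if o ∉ A then contrib P ε x i o else 0) with hWi
  set Wj := ∑ o : Out P j, (if o ∉ B then contrib P ε x j o else 0) with hWj
  set K : ℝ := (Fintype.card A : ℝ) with hK
  have hT0 : 0 ≤ Tsum := by
    rw [hTsum]
    exact Finset.sum_nonneg fun oa _ => add_nonneg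
      (mul_nonneg hc.le (sub_nonneg.2 (he oa).1))
      (mul_nonneg hε.le (sub_nonneg.2 (he oa).2))
  have hWinn : ∀ o : Out P i, o ∈ Finset.univ →
      0 ≤ (if o ∉ A then contrib P ε x i o else 0) := by
    intro o _
    by_cases hoA : o ∈ A
    · simp [hoA]
    · rw [if_pos hoA]
      exact (hsign o.1.1 i o.1.2 o.2).1 (hA o hoA)
  have hWjnp : ∀ o : Out P j, o ∈ Finset.univ →
      (if o ∉ B then contrib P ε x j o else 0) ≤ 0 := by
    intro o _
    by_cases hoB : o ∈ B
    · simp [hoB]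
    · rw [if_pos hoB]
      exact (hsign o.1.1 j o.1.2 o.2).2 (hB o hoB)
  have hWi0 : 0 ≤ Wi := by rw [hWi]; exact Finset.sum_nonneg hWinn
  have hWj0 : Wj ≤ 0 := by rw [hWj]; exact Finset.sum_nonpos hWjnp
  have hK0 : (0:ℝ) ≤ K := by rw [hK]; positivity
  have hmain : x i - x j = Tsum + K * (ε * (x j - x i)) + Wi - Wj := by
    linear_combination hxi - hxj + hTS
  have hge : x j ≤ x i := by
    by_contra hlt; push_neg at hlt
    have h1 : 0 ≤ K * (ε * (x j - x i)) :=
      mul_nonneg hK0 (mul_nonneg hε.le (by linarith))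
    linarith
  refine ⟨hge, ?_⟩
  intro hw
  by_contra hng; push_neg at hng
  have heqx : x i = x j := le_antisymm hng hge
  rw [heqx] at hmain
  simp only [sub_self, mul_zero, add_zero] at hmain
  have hTz : Tsum = 0 := by linarith
  have hWiz : Wi = 0 := by linarith
  have hWjz : Wj = 0 := by linarith
  rcases hw with ⟨oa, hst⟩ | ⟨o0, ho0⟩ | ⟨o0, ho0⟩
  · have hterm_le : ((1 + ε * (m : ℝ) * (n : ℝ)) *
            (P.val (↑oa : Out P i).1.1 i (↑oa : Out P i).1.2
              - P.val (↑(e oa) : Out P j).1.1 j (↑(e oa) : Out P j).1.2)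
          + ε * (x (↑oa : Out P i).1.2 - x (↑(e oa) : Out P j).1.2)) ≤ Tsum := by
      rw [hTsum]
      exact Finset.single_le_sum (fun ob _ => add_nonneg
        (mul_nonneg hc.le (sub_nonneg.2 (he ob).1))
        (mul_nonneg hε.le (sub_nonneg.2 (he ob).2))) (Finset.mem_univ oa)
    have hpos : 0 < ((1 + ε * (m : ℝ) * (n : ℝ)) *
            (P.val (↑oa : Out P i).1.1 i (↑oa : Out P i).1.2
              - P.val (↑(e oa) : Out P j).1.1 j (↑(e oa) : Out P j).1.2)
          + ε * (x (↑oa : Out P i).1.2 - x (↑(e oa) : Out P j).1.2)) := by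
      rcases hst with h | h
      · exact add_pos_of_pos_of_nonneg (mul_pos hc (sub_pos.2 h))
          (mul_nonneg hε.le (sub_nonneg.2 (he oa).2))
      · exact add_pos_of_nonneg_of_pos (mul_nonneg hc.le (sub_nonneg.2 (he oa).1))
          (mul_pos hε (sub_pos.2 h))
    linarith
  · have hterm : (if o0 ∉ A then contrib P ε x i o0 else 0) = 0 :=
      (Finset.sum_eq_zero_iff_of_nonneg hWinn).1 (hWi ▸ hWiz) o0 (Finset.mem_univ o0)
    rw [if_pos ho0] at hterm
    have hval := hA o0 ho0
    have hgap : ε * (x i - x o0.1.2) = (1 + ε * (m : ℝ) * (n : ℝ)) * rmax := by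
      have h0 : P.val o0.1.1 i o0.1.2
          + ε * (x o0.1.2 - x i + P.val o0.1.1 i o0.1.2 * (m : ℝ) * (n : ℝ)) = 0 := hterm
      rw [hval] at h0
      linear_combination -h0
    obtain ⟨hmax, hmin, hva, hnda, hvb, hndb⟩ :=
      grs_gap hn hrmax P ε hε hreas2 x hx hsum i o0.1.2 hgap
    by_cases hij : j = i
    · subst hij
      have hBall : ∀ o : Out P j, o ∈ B := by
        intro o
        by_contra hoB
        have h1 := hB o hoB
        have h2 := hva o.1.1 o.1.2 o.2
        rw [h1] at h2; linarith
      have hBu : B = Set.univ := Set.eq_univ_iff_forall.2 hBall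
      have hcard : Nat.card A = Nat.card B := Nat.card_congr e
      have hAu : A = Set.univ := by
        refine Set.eq_of_subset_of_ncard_le (Set.subset_univ A) ?_ Set.finite_univ
        have h1 : A.ncard = B.ncard := by
          rw [← Nat.card_coe_set_eq, ← Nat.card_coe_set_eq, hcard]
        rw [h1, hBu]
      exact ho0 (hAu ▸ Set.mem_univ o0)
    · by_cases hpd : ∃ p, P.defined p i j
      · obtain ⟨p, hd⟩ := hpd
        have h1 : P.val p i j = rmax := hva p j hd
        have h2 : P.val p j i = -rmax := by rw [hskew p i j hd, h1]
        have hgap' : ε * (x j - x o0.1.2) = (1 + ε * (m : ℝ) * (n : ℝ)) * rmax := by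
          rw [show x j = x i from heqx.symm]; exact hgap
        obtain ⟨_, _, hva', _, _, _⟩ :=
          grs_gap hn hrmax P ε hε hreas2 x hx hsum j o0.1.2 hgap'
        have h3 := hva' p i (P.defined_symm p i j hd)
        rw [h2] at h3
        linarith
      · push_neg at hpd
        have hji : j ≠ i := hij
        have h1 : x j = x o0.1.2 := hnda ⟨0, hm⟩ j hji (hpd ⟨0, hm⟩)
        have h2 : x i - x o0.1.2 = 0 := by rw [heqx, h1]; ring
        rw [h2] at hgap
        have hp := mul_pos hc hrmax
        rw [mul_zero] at hgap
        linarith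
  · have hterm : (if o0 ∉ B then contrib P ε x j o0 else 0) = 0 :=
      (Finset.sum_eq_zero_iff_of_nonpos hWjnp).1 (hWj ▸ hWjz) o0 (Finset.mem_univ o0)
    rw [if_pos ho0] at hterm
    have hval := hB o0 ho0
    have hgap : ε * (x o0.1.2 - x j) = (1 + ε * (m : ℝ) * (n : ℝ)) * rmax := by
      have h0 : P.val o0.1.1 j o0.1.2
          + ε * (x o0.1.2 - x j + P.val o0.1.1 j o0.1.2 * (m : ℝ) * (n : ℝ)) = 0 := hterm
      rw [hval] at h0
      linear_combination h0
    obtain ⟨hmax, hmin, hva, hnda, hvb, hndb⟩ :=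
      grs_gap hn hrmax P ε hε hreas2 x hx hsum o0.1.2 j hgap
    by_cases hij : i = j
    · subst hij
      have hAall : ∀ o : Out P i, o ∈ A := by
        intro o
        by_contra hoA
        have h1 := hA o hoA
        have h2 := hvb o.1.1 o.1.2 o.2
        rw [h1] at h2; linarith
      have hAu : A = Set.univ := Set.eq_univ_iff_forall.2 hAall
      have hcard : Nat.card A = Nat.card B := Nat.card_congr e
      have hBu : B = Set.univ := by
        refine Set.eq_of_subset_of_ncard_le (Set.subset_univ B) ?_ Set.finite_univ
        have h1 : B.ncard = A.ncard := by
          rw [← Nat.card_coe_set_eq, ← Nat.card_coe_set_eq, hcard]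
        rw [h1, hAu]
      exact ho0 (hBu ▸ Set.mem_univ o0)
    · by_cases hpd : ∃ p, P.defined p j i
      · obtain ⟨p, hd⟩ := hpd
        have h1 : P.val p j i = -rmax := hvb p i hd
        have h2 : P.val p i j = rmax := by rw [hskew p j i hd, h1]; ring
        have hgap' : ε * (x o0.1.2 - x i) = (1 + ε * (m : ℝ) * (n : ℝ)) * rmax := by
          rw [show x i = x j from heqx]; exact hgap
        obtain ⟨_, _, _, _, hvb', _⟩ :=
          grs_gap hn hrmax P ε hε hreas2 x hx hsum o0.1.2 i hgap'
        have h3 := hvb' p j (P.defined_symm p j i hd)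
        rw [h2] at h3
        linarith
      · push_neg at hpd
        have h1 : x i = x o0.1.2 := hndb ⟨0, hm⟩ i hij (hpd ⟨0, hm⟩)
        have h2 : x o0.1.2 - x j = 0 := by rw [← h1, heqx]; ring
        rw [h2] at hgap
        have hp := mul_pos hc hrmax
        rw [mul_zero] at hgap
        linarith
end

section
/- For a complete array of paired comparisons (every r_{ij}^p defined for i ≠ j and all p), the generalized row sum solution satisfies x_i = s_i for every ε ≥ 0, where s_i = ∑_{(k,p)} r_{ik}^p is the ordinary row sum. -/
open scoped Classical

/-!
In the complete case the `(k, p)`-term of the system splits as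
`(1 + ε m n) r_{ik}^p + ε (x_k - x_i)`, so the system reads
`x_i = (1 + ε m n) s_i + ε m (∑_k x_k - n x_i)`. Summing over `i` and using `∑_i s_i = 0`
(skew-symmetry) gives `∑_i x_i = 0`, after which the system collapses to
`(1 + ε m n) x_i = (1 + ε m n) s_i`.
-/

open Finset

theorem sum_sum_eq_zero_of_antisymm {ι G : Type*} [Fintype ι] [AddCommGroup G]
    [IsAddTorsionFree G] (f : ι → ι → G) (hf : ∀ i k, f k i = -f i k) :
    ∑ i, ∑ k, f i k = 0 :=
  self_eq_neg.mp <| by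
    calc ∑ i, ∑ k, f i k = ∑ k, ∑ i, f i k := sum_comm
      _ = -∑ i, ∑ k, f i k := by
        simp only [← sum_neg_distrib]
        exact sum_congr rfl fun k _ => sum_congr rfl fun i _ => hf k i

theorem eq_of_eq_mul_add_mul_sum_sub {ι K : Type*} [Fintype ι] [Field K] {s x : ι → K}
    {c : K} (hc : 1 + c * Fintype.card ι ≠ 0) (hs : ∑ i, s i = 0)
    (hx : ∀ i, x i = (1 + c * Fintype.card ι) * s i + c * (∑ k, x k - Fintype.card ι * x i)) :
    x = s := by
  set N : K := (Fintype.card ι : K)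
  have hsum : ∑ i, x i = 0 := by
    calc ∑ i, x i = ∑ i, ((1 + c * N) * s i + c * (∑ k, x k - N * x i)) :=
          sum_congr rfl fun i _ => hx i
      _ = 0 := by
        simp only [sum_add_distrib, ← mul_sum, sum_sub_distrib, hs, sum_const, card_univ,
          nsmul_eq_mul, N]
        ring
  funext i
  have h := hx i
  rw [hsum] at h
  exact mul_left_cancel₀ hc (by linear_combination h)

namespace Profile

variable {rmin rmax : ℝ} {n m : ℕ} (P : Profile rmin rmax n m)

noncomputable def entry (p : Fin m) (i k : Fin n) : ℝ :=
  if P.defined p i k then P.val p i k else 0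

theorem entry_swap (hskew : ∀ p i j, P.defined p i j → P.val p j i = -P.val p i j)
    (p : Fin m) (i k : Fin n) : P.entry p k i = -P.entry p i k := by
  by_cases h : P.defined p i k
  · simp only [entry, if_pos h, if_pos (P.defined_symm p i k h), hskew p i k h]
  · simp only [entry, if_neg h, if_neg (mt (P.defined_symm p k i) h), neg_zero]

theorem sum_sum_sum_entry_eq_zero
    (hskew : ∀ p i j, P.defined p i j → P.val p j i = -P.val p i j) :
    ∑ i, ∑ k, ∑ p, P.entry p i k = 0 :=
  sum_sum_eq_zero_of_antisymm _ fun i k => by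
    simp only [← sum_neg_distrib]
    exact sum_congr rfl fun p _ => P.entry_swap hskew p i k

theorem generalizedTerm_eq (hcomplete : ∀ p (i j : Fin n), i ≠ j → P.defined p i j)
    (ε : ℝ) (x : Fin n → ℝ) (p : Fin m) (i k : Fin n) :
    (if P.defined p i k then
      P.val p i k + ε * (x k - x i + P.val p i k * (m : ℝ) * (n : ℝ)) else 0)
      = (1 + ε * m * n) * P.entry p i k + ε * (x k - x i) := by
  by_cases h : P.defined p i k
  · simp only [entry, if_pos h]
    ring
  · obtain rfl : k = i := by_contra fun hki => h (hcomplete p i k (Ne.symm hki))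
    simp only [entry, if_neg h]
    ring

theorem generalizedSum_eq (hcomplete : ∀ p (i j : Fin n), i ≠ j → P.defined p i j)
    (ε : ℝ) (x : Fin n → ℝ) (i : Fin n) :
    (∑ k, ∑ p, if P.defined p i k then
      P.val p i k + ε * (x k - x i + P.val p i k * (m : ℝ) * (n : ℝ)) else 0)
      = (1 + ε * m * n) * ∑ k, ∑ p, P.entry p i k + ε * m * (∑ k, x k - n * x i) := by
  simp only [P.generalizedTerm_eq hcomplete, sum_add_distrib, ← mul_sum, sum_const, card_univ,
    Fintype.card_fin, nsmul_eq_mul, sum_sub_distrib]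
  ring

end Profile

/-- For a complete skew-symmetric array (every `r_{ij}^p` with `i ≠ j` defined),
the generalized row sum solution coincides with the ordinary row sums
`sᵢ = ∑_{(k,p)} r_{ik}^p` for every `ε ≥ 0`. -/
theorem stmt17 (n m : ℕ) (rmax : ℝ) (P : Profile (-rmax) rmax n m)
    (hcomplete : ∀ p (i j : Fin n), i ≠ j → P.defined p i j)
    (hskew : ∀ p i j, P.defined p i j → P.val p j i = -P.val p i j)
    (ε : ℝ) (hε : 0 ≤ ε) (x : Fin n → ℝ)
    (hx : ∀ i, x i = ∑ k, ∑ p, if P.defined p i k then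
      P.val p i k + ε * (x k - x i + P.val p i k * (m : ℝ) * (n : ℝ)) else 0) :
    ∀ i, x i = ∑ k, ∑ p, if P.defined p i k then P.val p i k else 0 := by
  have hxs : x = fun i => ∑ k, ∑ p, P.entry p i k := by
    refine eq_of_eq_mul_add_mul_sum_sub (c := ε * m) ?_ (P.sum_sum_sum_entry_eq_zero hskew)
      fun i => ?_ <;> rw [Fintype.card_fin]
    · positivity
    · exact (hx i).trans (P.generalizedSum_eq hcomplete ε x i)
  exact fun i => congrFun hxs i
end

section
/- For any ε ≥ 0 and any array of m skew-symmetric n×n paired comparison matrices, the generalized row sum system x_i = ∑_{(k,p)|i}(r_{ik}^p + ε(x_k − x_i + r_{ik}^p·m·n)), i = 1,...,n, has a unique real solution. -/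
/-! Writing `m_{ik}` for the number of comparisons between `X_i` and `X_k` and `s` for the row
sums, the system reads `(I + εL) x = (1 + εmn) s`, where `(L x)_i = ∑_k m_{ik} (x_i - x_k)`.
For `ε ≥ 0` the operator `I + εL` is injective by a discrete maximum principle: if
`x + εLx = 0`, then at a maximal coordinate `(Lx)_i ≥ 0` forces `x_i ≤ 0`, and at a minimal one
`x_i ≥ 0`. Injectivity of an endomorphism of `ℝⁿ` gives bijectivity. -/

open scoped Classical

section WeightedLaplacian

variable {ι : Type*} [Fintype ι] (w : ι → ι → ℝ)

noncomputable def weightedLaplacian : (ι → ℝ) →ₗ[ℝ] (ι → ℝ) :=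
  LinearMap.pi fun i =>
    ∑ k, w i k • (LinearMap.proj (R := ℝ) (φ := fun _ : ι => ℝ) i - LinearMap.proj k)

theorem weightedLaplacian_apply (x : ι → ℝ) (i : ι) :
    weightedLaplacian w x i = ∑ k, w i k * (x i - x k) := by
  simp [weightedLaplacian]

variable {w}

theorem weightedLaplacian_nonneg_of_forall_le (hw : ∀ i k, 0 ≤ w i k) {x : ι → ℝ} {i : ι}
    (hi : ∀ k, x k ≤ x i) : 0 ≤ weightedLaplacian w x i := by
  rw [weightedLaplacian_apply]
  exact Finset.sum_nonneg fun k _ => mul_nonneg (hw i k) (sub_nonneg.mpr (hi k))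

theorem weightedLaplacian_nonpos_of_forall_ge (hw : ∀ i k, 0 ≤ w i k) {x : ι → ℝ} {i : ι}
    (hi : ∀ k, x i ≤ x k) : weightedLaplacian w x i ≤ 0 := by
  have := weightedLaplacian_nonneg_of_forall_le hw (x := -x) (i := i) (fun k => neg_le_neg (hi k))
  simpa using this

theorem injective_id_add_smul_weightedLaplacian (hw : ∀ i k, 0 ≤ w i k) {ε : ℝ}
    (hε : 0 ≤ ε) :
    Function.Injective (LinearMap.id + ε • weightedLaplacian w : (ι → ℝ) →ₗ[ℝ] ι → ℝ) := by
  rw [injective_iff_map_eq_zero]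
  intro x hx
  rcases isEmpty_or_nonempty ι with hι | hι
  · exact Subsingleton.elim x 0
  have hcoord : ∀ i, x i + ε * weightedLaplacian w x i = 0 := fun i => by
    simpa using congrFun hx i
  obtain ⟨imax, hmax⟩ := Finite.exists_max x
  obtain ⟨imin, hmin⟩ := Finite.exists_min x
  have hmax_nonpos : x imax ≤ 0 := by
    linarith [hcoord imax, mul_nonneg hε (weightedLaplacian_nonneg_of_forall_le hw hmax)]
  have hmin_nonneg : 0 ≤ x imin := by
    linarith [hcoord imin, mul_nonpos_of_nonneg_of_nonpos hε
      (weightedLaplacian_nonpos_of_forall_ge hw hmin)]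
  funext i
  exact le_antisymm ((hmax i).trans hmax_nonpos) (hmin_nonneg.trans (hmin i))

theorem existsUnique_add_smul_weightedLaplacian_eq (hw : ∀ i k, 0 ≤ w i k) {ε : ℝ}
    (hε : 0 ≤ ε) (b : ι → ℝ) :
    ∃! x : ι → ℝ, x + ε • weightedLaplacian w x = b := by
  have hinj := injective_id_add_smul_weightedLaplacian hw hε
  exact Function.Bijective.existsUnique ⟨hinj, LinearMap.injective_iff_surjective.mp hinj⟩ b

end WeightedLaplacian

namespace Profile

variable {rmin rmax : ℝ} {n m : ℕ} (P : Profile rmin rmax n m)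

noncomputable def comparisonCount (i k : Fin n) : ℝ :=
  ∑ p, if P.defined p i k then 1 else 0

noncomputable def rowSum (i : Fin n) : ℝ :=
  ∑ k, ∑ p, if P.defined p i k then P.val p i k else 0

theorem comparisonCount_nonneg (i k : Fin n) : 0 ≤ P.comparisonCount i k :=
  Finset.sum_nonneg fun p _ => by split_ifs <;> norm_num

theorem generalizedRowSum_eq (ε : ℝ) (x : Fin n → ℝ) (i : Fin n) :
    (∑ k, ∑ p, if P.defined p i k then
      P.val p i k + ε * (x k - x i + P.val p i k * (m : ℝ) * (n : ℝ)) else 0) =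
      (1 + ε * m * n) * P.rowSum i - ε * weightedLaplacian P.comparisonCount x i := by
  simp only [weightedLaplacian_apply, rowSum, comparisonCount, Finset.mul_sum, Finset.sum_mul,
    ← Finset.sum_sub_distrib]
  refine Finset.sum_congr rfl fun k _ => Finset.sum_congr rfl fun p _ => ?_
  split_ifs <;> ring

end Profile

theorem stmt18_general (n m : ℕ) (rmax : ℝ) (P : Profile (-rmax) rmax n m)
    (ε : ℝ) (hε : 0 ≤ ε) :
    ∃! x : Fin n → ℝ, ∀ i, x i = ∑ k, ∑ p, if P.defined p i k then
      P.val p i k + ε * (x k - x i + P.val p i k * (m : ℝ) * (n : ℝ)) else 0 := by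
  have hsystem : ∀ x : Fin n → ℝ,
      (∀ i, x i = ∑ k, ∑ p, if P.defined p i k then
        P.val p i k + ε * (x k - x i + P.val p i k * (m : ℝ) * (n : ℝ)) else 0) ↔
      x + ε • weightedLaplacian P.comparisonCount x =
        fun i => (1 + ε * m * n) * P.rowSum i := by
    intro x
    simp only [P.generalizedRowSum_eq, funext_iff, Pi.add_apply, Pi.smul_apply, smul_eq_mul,
      eq_sub_iff_add_eq]
  exact (existsUnique_congr hsystem).mpr
    (existsUnique_add_smul_weightedLaplacian_eq P.comparisonCount_nonneg hε _)

/-- For any `ε ≥ 0` and any array of `m` skew-symmetric paired comparison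
matrices, the generalized row sum system has a unique real solution. -/
theorem stmt18 (n m : ℕ) (rmax : ℝ) (P : Profile (-rmax) rmax n m)
    (hskew : ∀ p i j, P.defined p i j → P.val p j i = -P.val p i j)
    (ε : ℝ) (hε : 0 ≤ ε) :
    ∃! x : Fin n → ℝ, ∀ i, x i = ∑ k, ∑ p, if P.defined p i k then
      P.val p i k + ε * (x k - x i + P.val p i k * (m : ℝ) * (n : ℝ)) else 0 :=
  stmt18_general n m rmax P ε hε
end
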